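/- arXiv:1902.02736 — 5 statements merged into one kernel-verified Lean document; each statement's English description precedes it below -/
import Mathlib

section
/- Fix a C-sequence ⟨C_α | α < ω₁⟩ on ω₁ satisfying (⋆). Then ρ₁ is coherent modulo finite: for all β < γ < ω₁, ρ₁(α,γ) = ρ₁(α,β) for all but finitely many α < β. -/
noncomputable section
open Ordinal Set

/-- The first uncountable ordinal `ω₁`. -/
def omega1 : Ordinal.{0} := (Cardinal.aleph 1).ord

/-- `IsOtp s o`: the set of ordinals `s` has order type `o`. -/
def IsOtp (s : Set Ordinal.{0}) (o : Ordinal.{0}) : Prop :=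
  Nonempty (s ≃o Set.Iio o)

/-- A C-sequence on `ω₁`: each `C α` is a cofinal subset of `α` (in particular `C 0 = ∅`). -/
def IsCSequence (C : Ordinal.{0} → Set Ordinal.{0}) : Prop :=
  ∀ α, α < omega1 → (∀ ξ ∈ C α, ξ < α) ∧ (∀ ξ, ξ < α → ∃ η ∈ C α, ξ ≤ η)

/-- The condition `(⋆)`: `otp (C α) = cf (α)` for all `α < ω₁`. -/
def StarProperty (C : Ordinal.{0} → Set Ordinal.{0}) : Prop :=
  ∀ α, α < omega1 → IsOtp (C α) (Ordinal.cof α).ord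

/-- `Tr` is the upper trace function of the walk along the C-sequence `C`:
`Tr α α = {α}` and `Tr α β = {β} ∪ Tr α (min (C β \ α))` for `α < β < ω₁`. -/
def IsUpperTrace (C : Ordinal.{0} → Set Ordinal.{0})
    (Tr : Ordinal.{0} → Ordinal.{0} → Finset Ordinal.{0}) : Prop :=
  (∀ α, Tr α α = {α}) ∧
  ∀ α β, α < β → β < omega1 → Tr α β = insert β (Tr α (sInf (C β \ Set.Iio α)))

/-- `IsRho1 C Tr rho1`: `rho1 α β` is the maximum weight
`max {otp (C ξ ∩ α) | ξ ∈ Tr α β \ {α}}`, a natural number under `(⋆)`. -/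
def IsRho1 (C : Ordinal.{0} → Set Ordinal.{0})
    (Tr : Ordinal.{0} → Ordinal.{0} → Finset Ordinal.{0})
    (rho1 : Ordinal.{0} → Ordinal.{0} → ℕ) : Prop :=
  ∀ α β, α < β → β < omega1 →
    IsGreatest {o : Ordinal | ∃ ξ ∈ Tr α β, ξ ≠ α ∧ IsOtp (C ξ ∩ Set.Iio α) o}
      (rho1 α β)

/-- The number-of-steps function `ρ₂ (α, β) = |Tr (α, β)|`, as an integer. -/
def rho2 (Tr : Ordinal.{0} → Ordinal.{0} → Finset Ordinal.{0}) (α β : Ordinal.{0}) : ℤ :=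
  (Tr α β).card

/-!
Under `(⋆)` each `C β` has order type at most `ω`, so every weight `|C β ∩ α|` is finite, and
if the walk from `β` to `α` first steps to `ξ = min (C β ∖ α) > α`, then
`ρ₁(α, β) = max |C β ∩ α| ρ₁(α, ξ)`.

First, `ρ₁(·, β)` is finite-to-one: if `ρ₁(α, β) ≤ n`, then `ξ` is one of the first `n + 1`
elements of `C β`, and by induction only finitely many `α < ξ` have `ρ₁(α, ξ) ≤ n`.

For coherence, induct on `γ` and fix `β < γ`. For `α < β`, the first step `ξ_α` from `γ` lies in
the finite set `F = {ξ_β} ∪ (C γ ∩ β)`. By induction, for all but finitely many `α`,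
`ρ₁(α, ξ_α) = ρ₁(α, β)`, and by finite-to-oneness `ρ₁(α, β) > |C γ ∩ β| ≥ |C γ ∩ α|`. For such
`α`, the maximum is `ρ₁(α, β)`.
-/

theorem Ordinal.finite_Iio_natCast (n : ℕ) : (Iio (n : Ordinal.{0})).Finite :=
  Ordinal.natCast_image_Iio n ▸ (Set.finite_Iio n).image _

theorem IsOtp.eq_ncard {s : Set Ordinal.{0}} {o : Ordinal.{0}} (hs : s.Finite) (h : IsOtp s o) :
    o = s.ncard := by
  obtain ⟨e⟩ := h
  have hcard : Cardinal.mk s = Cardinal.lift.{1} o.card := by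
    rw [← Cardinal.mk_Iio_ordinal]; exact Cardinal.mk_congr e.toEquiv
  rw [← Ordinal.card_eq_nat, ← Cardinal.lift_inj.{0, 1}, ← hcard, Cardinal.lift_natCast,
    ← Nat.card_coe_set_eq]
  have := hs.to_subtype
  exact Nat.cast_card.symm

theorem isOtp_ncard {s : Set Ordinal.{0}} (hs : s.Finite) : IsOtp s s.ncard := by
  have hIcard : (Iio (s.ncard : Ordinal.{0})).ncard = s.ncard := by
    rw [← Ordinal.natCast_image_Iio, Set.ncard_image_of_injective _ Nat.cast_injective,
      ← Finset.coe_Iio, Set.ncard_coe_finset, Nat.card_Iio]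
  have := hs.fintype
  have := (Ordinal.finite_Iio_natCast s.ncard).fintype
  exact ⟨(Fintype.orderIsoFinOfCardEq s Nat.card_eq_fintype_card.symm).symm.trans
    (Fintype.orderIsoFinOfCardEq _ (Nat.card_eq_fintype_card.symm.trans hIcard))⟩

theorem IsOtp.finite_inter_Iio {s : Set Ordinal.{0}} {o : Ordinal.{0}} (h : IsOtp s o)
    (ho : o ≤ ω) {x : Ordinal} (hx : x ∈ s) : (s ∩ Iio x).Finite := by
  obtain ⟨e⟩ := h
  obtain ⟨n, hn⟩ := Ordinal.lt_omega0.1 ((e ⟨x, hx⟩).2.trans_le ho)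
  have := (Ordinal.finite_Iio_natCast n).to_subtype
  refine Set.finite_coe_iff.1 (Finite.of_injective
    (fun z : ↥(s ∩ Iio x) => (⟨e ⟨z, z.2.1⟩, ?_⟩ : Iio (n : Ordinal.{0}))) ?_)
  · rw [← hn, Set.mem_Iio, Subtype.coe_lt_coe, e.lt_iff_lt, Subtype.mk_lt_mk]
    exact z.2.2
  · intro z z' hzz'
    have hval : e ⟨z, z.2.1⟩ = e ⟨z', z'.2.1⟩ := Subtype.ext (by simpa using hzz')
    exact Subtype.ext (by simpa using e.injective hval)

theorem cof_ord_le_omega0 {γ : Ordinal.{0}} (hγ : γ < omega1) : (cof γ).ord ≤ ω := by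
  rw [← Cardinal.ord_aleph0, Cardinal.ord_le_ord]
  have := (Ordinal.cof_le_card γ).trans_lt (Cardinal.lt_ord.1 hγ)
  rwa [← Cardinal.succ_aleph0, Order.lt_succ_iff] at this

theorem Set.finite_setOf_ncard_inter_Iio_le {α : Type*} [LinearOrder α] {s : Set α}
    (hs : ∀ x ∈ s, (s ∩ Iio x).Finite) (n : ℕ) :
    {x ∈ s | (s ∩ Iio x).ncard ≤ n}.Finite := by
  by_contra hinf
  obtain ⟨t, hts, htcard⟩ := Set.Infinite.exists_subset_card_eq hinf (n + 2)
  have ht : t.Nonempty := Finset.card_pos.1 (by omega)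
  have hc := hts (t.max'_mem ht)
  have hsub : ↑(t.erase (t.max' ht)) ⊆ s ∩ Iio (t.max' ht) := fun x hx => by
    obtain ⟨hne, hxt⟩ := Finset.mem_erase.1 hx
    exact ⟨(hts hxt).1, lt_of_le_of_ne (t.le_max' x hxt) hne⟩
  have := (Set.ncard_le_ncard hsub (hs _ hc.1)).trans hc.2
  rw [Set.ncard_coe_finset, Finset.card_erase_of_mem (t.max'_mem ht)] at this
  omega

/-- `min (C β ∖ α)`: the first step of the walk from `β` down to `α`. -/
def nextStep (C : Ordinal.{0} → Set Ordinal.{0}) (α β : Ordinal.{0}) : Ordinal.{0} :=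
  sInf (C β \ Iio α)

section Walk

variable {C : Ordinal.{0} → Set Ordinal.{0}} {α β : Ordinal.{0}}

theorem nextStep_mem_diff (hC : IsCSequence C) (hαβ : α < β) (hβ : β < omega1) :
    nextStep C α β ∈ C β \ Iio α :=
  have ⟨η, hη, hαη⟩ := (hC β hβ).2 α hαβ
  csInf_mem ⟨η, hη, not_lt.2 hαη⟩

theorem le_nextStep (hC : IsCSequence C) (hαβ : α < β) (hβ : β < omega1) :
    α ≤ nextStep C α β :=
  not_lt.1 (nextStep_mem_diff hC hαβ hβ).2

theorem nextStep_lt (hC : IsCSequence C) (hαβ : α < β) (hβ : β < omega1) :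
    nextStep C α β < β :=
  (hC β hβ).1 _ (nextStep_mem_diff hC hαβ hβ).1

theorem nextStep_le {x : Ordinal} (hx : x ∈ C β) (hαx : α ≤ x) : nextStep C α β ≤ x :=
  csInf_le' ⟨hx, not_lt.2 hαx⟩

theorem inter_Iio_nextStep (hC : IsCSequence C) (hαβ : α < β) (hβ : β < omega1) :
    C β ∩ Iio (nextStep C α β) = C β ∩ Iio α := by
  refine Set.Subset.antisymm (fun x ⟨hx, hxξ⟩ => ⟨hx, ?_⟩)
    (Set.inter_subset_inter_right _ (Set.Iio_subset_Iio (le_nextStep hC hαβ hβ)))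
  by_contra hxα
  exact (not_le.2 hxξ) (nextStep_le hx (not_lt.1 hxα))

theorem finite_inter_Iio (hC : IsCSequence C) (hstar : StarProperty C) (hαβ : α < β)
    (hβ : β < omega1) : (C β ∩ Iio α).Finite := by
  rw [← inter_Iio_nextStep hC hαβ hβ]
  exact (hstar β hβ).finite_inter_Iio (cof_ord_le_omega0 hβ) (nextStep_mem_diff hC hαβ hβ).1

theorem nextStep_mem_insert (hC : IsCSequence C) {γ : Ordinal} (hαβ : α ≤ β) (hβγ : β < γ)
    (hγ : γ < omega1) : nextStep C α γ ∈ insert (nextStep C β γ) (C γ ∩ Iio β) := by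
  have hαγ := hαβ.trans_lt hβγ
  have hξβ := nextStep_mem_diff hC hβγ hγ
  rcases (nextStep_le (α := α) hξβ.1 (hαβ.trans (not_lt.1 hξβ.2))).eq_or_lt with heq | hlt
  · exact Or.inl heq
  · rw [← inter_Iio_nextStep hC hβγ hγ]
    exact Or.inr ⟨(nextStep_mem_diff hC hαγ hγ).1, hlt⟩

variable {Tr : Ordinal.{0} → Ordinal.{0} → Finset Ordinal.{0}}
  {rho1 : Ordinal.{0} → Ordinal.{0} → ℕ}

theorem ncard_inter_Iio_le_rho1 (hC : IsCSequence C) (hstar : StarProperty C)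
    (hTr : IsUpperTrace C Tr) (hrho1 : IsRho1 C Tr rho1) (hαβ : α < β) (hβ : β < omega1) :
    (C β ∩ Iio α).ncard ≤ rho1 α β := by
  have hβmem : β ∈ Tr α β := hTr.2 α β hαβ hβ ▸ Finset.mem_insert_self _ _
  exact_mod_cast (hrho1 α β hαβ hβ).2
    ⟨β, hβmem, hαβ.ne', isOtp_ncard (finite_inter_Iio hC hstar hαβ hβ)⟩

theorem rho1_eq_max (hC : IsCSequence C) (hstar : StarProperty C)
    (hTr : IsUpperTrace C Tr) (hrho1 : IsRho1 C Tr rho1) (hαβ : α < β) (hβ : β < omega1)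
    (hαξ : α < nextStep C α β) :
    rho1 α β = max (C β ∩ Iio α).ncard (rho1 α (nextStep C α β)) := by
  have hfin := finite_inter_Iio hC hstar hαβ hβ
  have hξ := (nextStep_lt hC hαβ hβ).trans hβ
  have hweights : {o | ∃ ζ ∈ Tr α β, ζ ≠ α ∧ IsOtp (C ζ ∩ Iio α) o} =
      insert ((C β ∩ Iio α).ncard : Ordinal)
        {o | ∃ ζ ∈ Tr α (nextStep C α β), ζ ≠ α ∧ IsOtp (C ζ ∩ Iio α) o} := by
    ext o
    rw [hTr.2 α β hαβ hβ]
    simp only [Finset.mem_insert, exists_eq_or_imp, Set.mem_ofPred_eq, Set.mem_insert_iff,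
      ne_eq, hαβ.ne', not_false_eq_true, true_and]
    exact or_congr_left ⟨(·.eq_ncard hfin), fun h => h ▸ isOtp_ncard hfin⟩
  have := (hrho1 α β hαβ hβ).unique (hweights ▸ (hrho1 α _ hαξ hξ).insert _)
  rw [← Nat.mono_cast.map_max] at this
  exact_mod_cast this

theorem finite_setOf_rho1_le (hC : IsCSequence C) (hstar : StarProperty C)
    (hTr : IsUpperTrace C Tr) (hrho1 : IsRho1 C Tr rho1) (hβ : β < omega1) (n : ℕ) :
    {α | α < β ∧ rho1 α β ≤ n}.Finite := by
  induction β using WellFoundedLT.induction with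
  | _ β ih =>
    set S := {x ∈ C β | (C β ∩ Iio x).ncard ≤ n}
    have hS : S.Finite := Set.finite_setOf_ncard_inter_Iio_le
      (fun x hx => finite_inter_Iio hC hstar ((hC β hβ).1 x hx) hβ) n
    refine (hS.union (hS.biUnion fun x hx =>
      ih x ((hC β hβ).1 x hx.1) (((hC β hβ).1 x hx.1).trans hβ))).subset ?_
    rintro α ⟨hαβ, hαn⟩
    have hξS : nextStep C α β ∈ S := by
      refine ⟨(nextStep_mem_diff hC hαβ hβ).1, ?_⟩
      rw [inter_Iio_nextStep hC hαβ hβ]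
      exact (ncard_inter_Iio_le_rho1 hC hstar hTr hrho1 hαβ hβ).trans hαn
    rcases (le_nextStep hC hαβ hβ).eq_or_lt with hα | hα
    · exact Or.inl (hα ▸ hξS)
    · refine Or.inr (Set.mem_biUnion hξS ⟨hα, ?_⟩)
      rw [rho1_eq_max hC hstar hTr hrho1 hαβ hβ hα] at hαn
      exact (le_max_right _ _).trans hαn

theorem finite_setOf_rho1_ne_of_lt (hC : IsCSequence C) (hstar : StarProperty C)
    (hTr : IsUpperTrace C Tr) (hrho1 : IsRho1 C Tr rho1) {γ : Ordinal} (hγ : γ < omega1)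
    (ih : ∀ δ < γ, ∀ β < δ, {α | α < β ∧ rho1 α δ ≠ rho1 α β}.Finite)
    (hβγ : β < γ) : {α | α < β ∧ rho1 α γ ≠ rho1 α β}.Finite := by
  set F := insert (nextStep C β γ) (C γ ∩ Iio β)
  set M := (C γ ∩ Iio β).ncard
  have hF : F.Finite := (finite_inter_Iio hC hstar hβγ hγ).insert _
  have hpair : ∀ x ∈ F, {α | α < x ∧ α < β ∧ rho1 α x ≠ rho1 α β}.Finite := by
    intro x hx
    have hxγ : x < γ := (hC γ hγ).1 x <| by
      rcases hx with rfl | hx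
      exacts [(nextStep_mem_diff hC hβγ hγ).1, hx.1]
    rcases lt_trichotomy x β with hxβ | rfl | hβx
    · exact (ih β hβγ x hxβ).subset fun α ⟨h1, _, h3⟩ => ⟨h1, Ne.symm h3⟩
    · simp
    · exact (ih x hxγ β hβx).subset fun α ⟨_, h2, h3⟩ => ⟨h2, h3⟩
  refine (hF.union ((finite_setOf_rho1_le hC hstar hTr hrho1 (hβγ.trans hγ) M).union
    (hF.biUnion hpair))).subset ?_
  rintro α ⟨hαβ, hne⟩
  have hαγ := hαβ.trans hβγ
  have hξF : nextStep C α γ ∈ F := nextStep_mem_insert hC hαβ.le hβγ hγ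
  by_contra hout
  simp only [Set.mem_union, Set.mem_iUnion, not_or, not_exists] at hout
  obtain ⟨hαF, hαM, hαpair⟩ := hout
  have hα : α < nextStep C α γ := (le_nextStep hC hαγ hγ).lt_of_ne fun h => hαF (h ▸ hξF)
  have hM : M < rho1 α β := not_le.1 fun h => hαM ⟨hαβ, h⟩
  have hstep : rho1 α (nextStep C α γ) = rho1 α β :=
    not_not.1 fun h => hαpair _ hξF ⟨hα, hαβ, h⟩
  have hw : (C γ ∩ Iio α).ncard ≤ M := Set.ncard_le_ncard
    (Set.inter_subset_inter_right _ (Set.Iio_subset_Iio hαβ.le)) (finite_inter_Iio hC hstar hβγ hγ)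
  rw [rho1_eq_max hC hstar hTr hrho1 hαγ hγ hα, hstep] at hne
  exact hne (max_eq_right (by omega))

end Walk

/-- Theorem (coherence of ρ₁): for a C-sequence on ω₁ satisfying (⋆),
`ρ₁(·,γ) ↾ β =* ρ₁(·,β)` for all `β < γ < ω₁`. -/
theorem statement0 (C : Ordinal → Set Ordinal) (hC : IsCSequence C) (hstar : StarProperty C)
    (Tr : Ordinal → Ordinal → Finset Ordinal) (hTr : IsUpperTrace C Tr)
    (rho1 : Ordinal → Ordinal → ℕ) (hrho1 : IsRho1 C Tr rho1) :
    ∀ β γ, β < γ → γ < omega1 →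
      {α : Ordinal | α < β ∧ rho1 α γ ≠ rho1 α β}.Finite := by
  intro β γ hβγ hγ
  induction γ using WellFoundedLT.induction generalizing β with
  | _ γ ih =>
    exact finite_setOf_rho1_ne_of_lt hC hstar hTr hrho1 hγ
      (fun δ hδ β hβ => ih δ hδ β hβ (hδ.trans hγ)) hβγ
end
end

section
/- Fix a C-sequence ⟨C_α | α < ω₁⟩ on ω₁ satisfying (⋆). Let 𝒜 = {(β_i, γ_i) | i ∈ ω₁} ⊆ ω₁ × ω₁ satisfy max{β_i, γ_i} < min{β_j, γ_j} for every i < j in ω₁. Then for every ℓ ∈ ℕ there exists a cofinal set Γ ⊆ ω₁ such that ρ₂(β_i, γ_j) > ℓ for all i < j in Γ. -/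
noncomputable section
open Ordinal Set

/-! By induction on `ℓ`, for every unbounded family of pairs. Choose for each `δ` an index
`J δ > δ`. Under `(⋆)` the ladders `C η` on the walk from `g (J δ)` down to `δ` meet `δ` in a
finite set, bounded by some `f δ < δ`, so every walk from `g (J δ)` to an `α ∈ (f δ, δ]` passes
through `δ` and is longer than the walk from `δ` to `α`. A pressing-down argument gives `ξ₀`
with `f δ ≤ ξ₀` for unboundedly many closure points `δ`; the induction hypothesis for the pairs
`(b (J δ), δ)` on those `δ` gives `ρ₂(b (J δ), δ') > ℓ`, hence `ρ₂(b (J δ), g (J δ')) > ℓ + 1`. -/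

lemma omega1_eq : omega1 = ω₁ := Cardinal.ord_aleph 1

lemma add_one_lt_omega1 {δ : Ordinal.{0}} (h : δ < omega1) : δ + 1 < omega1 := by
  rw [omega1_eq] at *
  exact (Cardinal.isSuccLimit_omega 1).succ_lt h

lemma countable_Iio_of_lt_omega1 {x : Ordinal.{0}} (hx : x < omega1) : (Iio x).Countable := by
  rw [← Cardinal.le_aleph0_iff_set_countable, Cardinal.mk_Iio_ordinal, Cardinal.lift_le_aleph0,
    ← Cardinal.lt_aleph_one_iff]
  exact Cardinal.lt_ord.1 hx

lemma exists_bound_lt_omega1 {x : Ordinal.{0}} (hx : x < omega1) {G : Ordinal.{0} → Ordinal.{0}}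
    (hG : ∀ ν < x, G ν < omega1) : ∃ y < omega1, ∀ ν < x, G ν < y := by
  have := (countable_Iio_of_lt_omega1 hx).to_subtype
  refine ⟨⨆ ν : Iio x, G ν + 1, ?_, fun ν hν => ?_⟩
  · rw [omega1_eq] at hG ⊢
    exact Ordinal.iSup_lt_omega_one fun ν =>
      (Cardinal.isSuccLimit_omega 1).succ_lt (hG ν ν.2)
  · exact (Order.lt_add_one_iff.2 le_rfl).trans_le
      (Ordinal.le_iSup (fun ν : Iio x => G ν + 1) ⟨ν, hν⟩)

lemma exists_closed_gt {G : Ordinal.{0} → Ordinal.{0}} (hG : ∀ ν < omega1, G ν < omega1)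
    {θ : Ordinal.{0}} (hθ : θ < omega1) :
    ∃ δ, θ < δ ∧ δ < omega1 ∧ ∀ ν < δ, G ν < δ := by
  have hstep : ∀ x < omega1, ∃ y, x < y ∧ y < omega1 ∧ ∀ ν < x, G ν < y := by
    intro x hx
    obtain ⟨y, hy, hGy⟩ := exists_bound_lt_omega1 hx fun ν hν => hG ν (hν.trans hx)
    exact ⟨max y (x + 1), (Order.lt_add_one_iff.2 le_rfl).trans_le (le_max_right _ _),
      max_lt hy (add_one_lt_omega1 hx), fun ν hν => (hGy ν hν).trans_le (le_max_left _ _)⟩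
  choose! D hD using hstep
  set d : ℕ → Ordinal.{0} := fun n => D^[n] θ
  have hd_succ : ∀ n, d (n + 1) = D (d n) := fun n => Function.iterate_succ_apply' D n θ
  have hd : ∀ n, d n < omega1 := by
    intro n
    induction n with
    | zero => exact hθ
    | succ n ih => rw [hd_succ]; exact (hD _ ih).2.1
  refine ⟨⨆ n, d n, ?_, ?_, fun ν hν => ?_⟩
  · exact (hD θ hθ).1.trans_le (Ordinal.le_iSup d 1)
  · rw [omega1_eq] at hd ⊢
    exact Ordinal.iSup_lt_omega_one hd
  · obtain ⟨n, hn⟩ := Ordinal.lt_iSup_iff.1 hν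
    exact ((hD _ (hd n)).2.2 ν hn).trans_le (hd_succ n ▸ Ordinal.le_iSup d (n + 1))

/-- A weak form of Fodor's lemma. -/
lemma exists_forall_exists_closed_le {F f : Ordinal.{0} → Ordinal.{0}}
    (hF : ∀ ν < omega1, F ν < omega1) (hf : ∀ δ, 0 < δ → δ < omega1 → f δ < δ) :
    ∃ ξ₀ < omega1, ∀ θ < omega1,
      ∃ δ, θ < δ ∧ δ < omega1 ∧ (∀ ν < δ, F ν < δ) ∧ f δ ≤ ξ₀ := by
  by_contra! h
  choose! H hH hHf using h
  obtain ⟨δ, hδ0, hδ, hδF⟩ := exists_closed_gt (G := fun ν => max (F ν) (H ν))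
    (fun ν hν => max_lt (hF ν hν) (hH ν hν)) (omega1_eq ▸ Ordinal.omega_pos 1)
  have hfδ := hf δ hδ0 hδ
  exact (hHf (f δ) (hfδ.trans hδ) δ ((le_max_right _ _).trans_lt (hδF _ hfδ)) hδ
    fun ν hν => (le_max_left _ _).trans_lt (hδF ν hν)).false

lemma finite_Iio_of_lt_omega0 {o : Ordinal.{0}} (h : o < ω) : (Iio o).Finite := by
  rw [← Cardinal.lt_aleph0_iff_set_finite, Cardinal.mk_Iio_ordinal, Cardinal.lift_lt_aleph0]
  exact Ordinal.card_lt_aleph0.2 h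

lemma finite_inter_Iio_of_isOtp {s : Set Ordinal.{0}} {o : Ordinal.{0}} (hs : IsOtp s o)
    (ho : o ≤ ω) {c : Ordinal.{0}} (hc : c ∈ s) : (s ∩ Iio c).Finite := by
  obtain ⟨e⟩ := hs
  have hfin := (finite_Iio_of_lt_omega0 ((e ⟨c, hc⟩).2.trans_le ho)).to_subtype
  refine Set.finite_coe_iff.1 (Finite.of_injective
    (fun x : ↥(s ∩ Iio c) => (⟨e ⟨x, x.2.1⟩, e.strictMono (Subtype.mk_lt_mk.2 x.2.2)⟩ :
      Iio (e ⟨c, hc⟩ : Ordinal.{0}))) fun x y hxy => ?_)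
  have := e.injective (Subtype.ext (Subtype.mk.inj hxy))
  exact Subtype.ext (Subtype.mk.inj this)

lemma finite_C_inter_Iio {C : Ordinal.{0} → Set Ordinal.{0}} (hC : IsCSequence C)
    (hstar : StarProperty C) {η δ : Ordinal.{0}} (hη : η < omega1) (hδ : δ < η) :
    (C η ∩ Iio δ).Finite := by
  obtain ⟨c, hc, hδc⟩ := (hC η hη).2 δ hδ
  have hcof : (Ordinal.cof η).ord ≤ ω := by
    rw [Cardinal.ord_le, Ordinal.card_omega0, ← Cardinal.lt_aleph_one_iff]
    exact (Ordinal.cof_le_card η).trans_lt (Cardinal.lt_ord.1 hη)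
  exact (finite_inter_Iio_of_isOtp (hstar η hη) hcof hc).subset
    fun x hx => ⟨hx.1, hx.2.trans_le hδc⟩

section Walk

variable {C : Ordinal.{0} → Set Ordinal.{0}} {Tr : Ordinal.{0} → Ordinal.{0} → Finset Ordinal.{0}}

lemma sInf_diff_Iio_spec (hC : IsCSequence C) {α β : Ordinal.{0}} (hαβ : α < β)
    (hβ : β < omega1) :
    sInf (C β \ Iio α) ∈ C β ∧ α ≤ sInf (C β \ Iio α) ∧ sInf (C β \ Iio α) < β := by
  obtain ⟨η, hη, hαη⟩ := (hC β hβ).2 α hαβ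
  obtain ⟨hmem, hle⟩ := csInf_mem (s := C β \ Iio α) ⟨η, hη, not_lt.2 hαη⟩
  exact ⟨hmem, not_lt.1 hle, (hC β hβ).1 _ hmem⟩

lemma mem_trace_self (hTr : IsUpperTrace C Tr) {α β : Ordinal.{0}} (hαβ : α ≤ β)
    (hβ : β < omega1) : β ∈ Tr α β := by
  rcases hαβ.eq_or_lt with rfl | hlt
  · simp [hTr.1]
  · simp [hTr.2 α β hlt hβ]

lemma le_of_mem_trace (hC : IsCSequence C) (hTr : IsUpperTrace C Tr) {α β x : Ordinal.{0}}
    (hαβ : α ≤ β) (hβ : β < omega1) (hx : x ∈ Tr α β) : x ≤ β := by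
  induction β using WellFoundedLT.induction with
  | _ β IH =>
    rcases hαβ.eq_or_lt with rfl | hlt
    · simp_all [hTr.1]
    · rw [hTr.2 α β hlt hβ, Finset.mem_insert] at hx
      obtain ⟨-, hαβ₁, hβ₁β⟩ := sInf_diff_Iio_spec hC hlt hβ
      rcases hx with rfl | hx
      · exact le_rfl
      · exact (IH _ hβ₁β hαβ₁ (hβ₁β.trans hβ) hx).trans hβ₁β.le

/-- The walk from `β` to `α` passes through `δ` when no ladder on the walk from `β` to `δ`
meets `[α, δ)`. -/
lemma trace_subset_trace (hC : IsCSequence C) (hTr : IsUpperTrace C Tr) {α δ β : Ordinal.{0}}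
    (hαδ : α ≤ δ) (hδβ : δ ≤ β) (hβ : β < omega1)
    (havoid : ∀ η ∈ Tr δ β, δ < η → ∀ c ∈ C η, α ≤ c → δ ≤ c) : Tr α δ ⊆ Tr α β := by
  induction β using WellFoundedLT.induction with
  | _ β IH =>
    rcases hδβ.eq_or_lt with rfl | hlt
    · exact subset_rfl
    obtain ⟨-, hδβ₁, hβ₁β⟩ := sInf_diff_Iio_spec hC hlt hβ
    have hstep : C β \ Iio α = C β \ Iio δ := by
      ext c
      simp only [mem_sdiff, mem_Iio, not_lt]
      exact ⟨fun h => ⟨h.1, havoid β (mem_trace_self hTr hlt.le hβ) hlt c h.1 h.2⟩,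
        fun h => ⟨h.1, hαδ.trans h.2⟩⟩
    rw [hTr.2 α β (hαδ.trans_lt hlt) hβ, hstep]
    refine (IH _ hβ₁β hδβ₁ (hβ₁β.trans hβ) fun η hη => havoid η ?_).trans
      (Finset.subset_insert _ _)
    rw [hTr.2 δ β hlt hβ]
    exact Finset.mem_insert_of_mem hη

lemma exists_rho2_lt (hC : IsCSequence C) (hTr : IsUpperTrace C Tr) (hstar : StarProperty C)
    {δ β : Ordinal.{0}} (hδ : 0 < δ) (hδβ : δ < β) (hβ : β < omega1) :
    ∃ ξ < δ, ∀ α, ξ < α → α ≤ δ → rho2 Tr α δ < rho2 Tr α β := by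
  set U := ⋃ η ∈ {η ∈ (Tr δ β : Set Ordinal.{0}) | δ < η}, C η ∩ Iio δ
  have hU : U.Finite := Set.Finite.biUnion ((Tr δ β).finite_toSet.subset (sep_subset _ _))
    fun η hη => finite_C_inter_Iio hC hstar ((le_of_mem_trace hC hTr hδβ.le hβ hη.1).trans_lt hβ)
      hη.2
  refine ⟨hU.toFinset.sup id, (Finset.sup_lt_iff (by simpa using hδ)).2 fun c hc => ?_,
    fun α hξα hαδ => ?_⟩
  · obtain ⟨η, -, -, hcδ⟩ := mem_iUnion₂.1 (hU.mem_toFinset.1 hc)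
    exact hcδ
  have hsub : Tr α δ ⊆ Tr α β := trace_subset_trace hC hTr hαδ hδβ.le hβ
    fun η hη hδη c hc hαc => by
      by_contra! hcδ
      exact (hξα.trans_le hαc).not_ge
        (Finset.le_sup (f := id) (hU.mem_toFinset.2 (mem_iUnion₂.2 ⟨η, ⟨hη, hδη⟩, hc, hcδ⟩)))
  have hβ_notMem : β ∉ Tr α δ := fun h =>
    (le_of_mem_trace hC hTr hαδ (hδβ.trans hβ) h).not_gt hδβ
  unfold rho2
  exact_mod_cast Finset.card_lt_card ((Finset.ssubset_iff_of_subset hsub).2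
    ⟨β, mem_trace_self hTr (hαδ.trans hδβ.le) hβ, hβ_notMem⟩)

end Walk

def IsUnboundedFamily (S : Set Ordinal.{0}) (b g : Ordinal.{0} → Ordinal.{0}) : Prop :=
  (∀ i ∈ S, i < omega1 ∧ b i < omega1 ∧ g i < omega1) ∧
  (∀ i ∈ S, ∀ j ∈ S, i < j → b i ≤ g j) ∧
  ∀ δ < omega1, ∃ i ∈ S, δ < i ∧ δ < b i ∧ δ < g i

section Rho2

variable {C : Ordinal.{0} → Set Ordinal.{0}} {Tr : Ordinal.{0} → Ordinal.{0} → Finset Ordinal.{0}}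

lemma exists_family_rho2_lt (hC : IsCSequence C) (hTr : IsUpperTrace C Tr)
    (hstar : StarProperty C) {S : Set Ordinal.{0}} {b g : Ordinal.{0} → Ordinal.{0}}
    (hfam : IsUnboundedFamily S b g) :
    ∃ (S' : Set Ordinal.{0}) (J : Ordinal.{0} → Ordinal.{0}),
      IsUnboundedFamily S' (fun δ => b (J δ)) id ∧ (∀ δ ∈ S', J δ ∈ S ∧ δ < J δ) ∧
      ∀ δ ∈ S', ∀ δ' ∈ S', δ < δ' →
        J δ < δ' ∧ rho2 Tr (b (J δ)) δ' < rho2 Tr (b (J δ)) (g (J δ')) := by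
  obtain ⟨hlt, -, hunb⟩ := hfam
  choose! J hJS hJ using hunb
  have hJlt : ∀ ν < omega1, J ν < omega1 ∧ b (J ν) < omega1 ∧ g (J ν) < omega1 :=
    fun ν hν => hlt _ (hJS ν hν)
  choose! f hf hfρ using fun δ (h0 : 0 < δ) (hδ : δ < omega1) =>
    exists_rho2_lt hC hTr hstar h0 (hJ δ hδ).2.2 (hJlt δ hδ).2.2
  obtain ⟨ξ₀, hξ₀, hpress⟩ := exists_forall_exists_closed_le (F := fun ν => max (J ν) (b (J ν)))
    (fun ν hν => max_lt (hJlt ν hν).1 (hJlt ν hν).2.1) hf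
  set S' := {δ | ξ₀ < δ ∧ δ < omega1 ∧ (∀ ν < δ, max (J ν) (b (J ν)) < δ) ∧ f δ ≤ ξ₀}
  have hJ_lt : ∀ {ν δ}, δ ∈ S' → ν < δ → J ν < δ ∧ b (J ν) < δ := fun hδ hν =>
    max_lt_iff.1 (hδ.2.2.1 _ hν)
  refine ⟨S', J, ⟨fun δ hδ => ⟨hδ.2.1, (hJlt δ hδ.2.1).2.1, hδ.2.1⟩,
    fun δ _ δ' hδ' h => (hJ_lt hδ' h).2.le, fun θ hθ => ?_⟩,
    fun δ hδ => ⟨hJS δ hδ.2.1, (hJ δ hδ.2.1).1⟩, fun δ hδ δ' hδ' hδδ' => ⟨(hJ_lt hδ' hδδ').1, ?_⟩⟩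
  · obtain ⟨δ, hθδ, hδ, hcl, hfδ⟩ := hpress (max θ ξ₀) (max_lt hθ hξ₀)
    have hθδ' : θ < δ := (le_max_left _ _).trans_lt hθδ
    exact ⟨δ, ⟨(le_max_right _ _).trans_lt hθδ, hδ, hcl, hfδ⟩, hθδ',
      hθδ'.trans (hJ δ hδ).2.1, hθδ'⟩
  · have hξ₀b : ξ₀ < b (J δ) := hδ.1.trans (hJ δ hδ.2.1).2.1
    exact hfρ δ' ((zero_le (a := ξ₀)).trans_lt (hδ.1.trans hδδ')) hδ'.2.1 (b (J δ))
      (hδ'.2.2.2.trans_lt hξ₀b) (hJ_lt hδ' hδδ').2.le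

lemma exists_cofinal_lt_rho2 (hC : IsCSequence C) (hTr : IsUpperTrace C Tr)
    (hstar : StarProperty C) (ℓ : ℕ) {S : Set Ordinal.{0}} {b g : Ordinal.{0} → Ordinal.{0}}
    (hfam : IsUnboundedFamily S b g) :
    ∃ Γ ⊆ S, (∀ ξ < omega1, ∃ η ∈ Γ, ξ ≤ η) ∧
      ∀ i ∈ Γ, ∀ j ∈ Γ, i < j → (ℓ : ℤ) < rho2 Tr (b i) (g j) := by
  induction ℓ generalizing S b g with
  | zero =>
    obtain ⟨hlt, hle, hunb⟩ := hfam
    refine ⟨S, subset_rfl, fun ξ hξ => ?_, fun i hi j hj hij => ?_⟩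
    · obtain ⟨i, hi, hξi, -⟩ := hunb ξ hξ
      exact ⟨i, hi, hξi.le⟩
    · have := mem_trace_self hTr (hle i hi j hj hij) (hlt j hj).2.2
      unfold rho2
      exact_mod_cast Finset.card_pos.2 ⟨_, this⟩
  | succ ℓ IH =>
    obtain ⟨S', J, hfam', hJS, hJρ⟩ := exists_family_rho2_lt hC hTr hstar hfam
    obtain ⟨Γ', hΓ'S', hΓ'cof, hΓ'ρ⟩ := IH hfam'
    refine ⟨J '' Γ', ?_, fun ξ hξ => ?_, ?_⟩
    · rintro _ ⟨δ, hδ, rfl⟩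
      exact (hJS δ (hΓ'S' hδ)).1
    · obtain ⟨δ, hδ, hξδ⟩ := hΓ'cof ξ hξ
      exact ⟨J δ, ⟨δ, hδ, rfl⟩, hξδ.trans (hJS δ (hΓ'S' hδ)).2.le⟩
    rintro _ ⟨δ, hδ, rfl⟩ _ ⟨δ', hδ', rfl⟩ hJδδ'
    have hδδ' : δ < δ' := by
      by_contra! h
      rcases h.eq_or_lt with rfl | h
      · exact hJδδ'.false
      · exact hJδδ'.not_gt (((hJρ δ' (hΓ'S' hδ') δ (hΓ'S' hδ) h).1).trans
          (hJS δ (hΓ'S' hδ)).2)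
    have hρ : (ℓ : ℤ) < rho2 Tr (b (J δ)) δ' := hΓ'ρ δ hδ δ' hδ' hδδ'
    have hρ' := (hJρ δ (hΓ'S' hδ) δ' (hΓ'S' hδ') hδδ').2
    push_cast
    omega

end Rho2

lemma le_self_of_strictMonoOn_Iio {f : Ordinal.{0} → Ordinal.{0}} {o : Ordinal.{0}}
    (hf : StrictMonoOn f (Iio o)) {i : Ordinal.{0}} (hi : i < o) : i ≤ f i := by
  induction i using WellFoundedLT.induction with
  | _ i IH =>
    by_contra! h
    exact (IH _ h (h.trans hi)).not_gt (hf (h.trans hi) hi h)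

/-- Claim: given pairwise separated pairs `(β i, γ i)` (`i < ω₁`) from `ω₁ × ω₁`,
for every `ℓ ∈ ℕ` there is a cofinal `Γ ⊆ ω₁` with `ρ₂(β i, γ j) > ℓ` for all `i < j` in `Γ`. -/
theorem statement4 (C : Ordinal → Set Ordinal) (hC : IsCSequence C) (hstar : StarProperty C)
    (Tr : Ordinal → Ordinal → Finset Ordinal) (hTr : IsUpperTrace C Tr)
    (b g : Ordinal → Ordinal)
    (hmem : ∀ i, i < omega1 → b i < omega1 ∧ g i < omega1)
    (hsep : ∀ i j, i < j → j < omega1 → max (b i) (g i) < min (b j) (g j)) :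
    ∀ ℓ : ℕ, ∃ Γ : Set Ordinal, (∀ x ∈ Γ, x < omega1) ∧
      (∀ ξ, ξ < omega1 → ∃ η ∈ Γ, ξ ≤ η) ∧
      ∀ i ∈ Γ, ∀ j ∈ Γ, i < j → (ℓ : ℤ) < rho2 Tr (b i) (g j) := by
  intro ℓ
  have hb : StrictMonoOn b (Iio omega1) := fun i _ j hj hij =>
    (le_max_left _ _).trans_lt ((hsep i j hij hj).trans_le (min_le_left _ _))
  have hg : StrictMonoOn g (Iio omega1) := fun i _ j hj hij =>
    (le_max_right _ _).trans_lt ((hsep i j hij hj).trans_le (min_le_right _ _))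
  have hfam : IsUnboundedFamily (Iio omega1) b g := by
    refine ⟨fun i hi => ⟨hi, hmem i hi⟩, fun i _ j hj hij =>
      ((le_max_left _ _).trans_lt ((hsep i j hij hj).trans_le (min_le_right _ _))).le,
      fun δ hδ => ?_⟩
    have hδ₁ := add_one_lt_omega1 hδ
    have hδlt : δ < δ + 1 := Order.lt_add_one_iff.2 le_rfl
    exact ⟨δ + 1, hδ₁, hδlt, hδlt.trans_le (le_self_of_strictMonoOn_Iio hb hδ₁),
      hδlt.trans_le (le_self_of_strictMonoOn_Iio hg hδ₁)⟩
  exact exists_cofinal_lt_rho2 hC hTr hstar ℓ hfam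
end
end

section
/- Fix a C-sequence ⟨C_α | α < ω₁⟩ on ω₁ satisfying (⋆). Then for all α < β < γ < ω₁, if maxL(β,γ) < α then β ∈ Tr(α,γ) and Tr(α,γ) = Tr(α,β) ∪ Tr(β,γ). -/
noncomputable section
open Ordinal Set

/-- The maximum of the lower trace: `maxL (α, β) = max {max (C ξ ∩ α) | ξ ∈ Tr (α, β) \ {α}}`,
with the convention `max ∅ = 0`. -/
def maxL (C : Ordinal.{0} → Set Ordinal.{0})
    (Tr : Ordinal.{0} → Ordinal.{0} → Finset Ordinal.{0}) (α β : Ordinal.{0}) : Ordinal.{0} :=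
  sSup {o : Ordinal | ∃ ξ ∈ Tr α β, ξ ≠ α ∧ o = sSup (C ξ ∩ Set.Iio α)}

/-!
Walk from `γ` down towards `α` and towards `β` simultaneously. At a step from `ξ`, the points of
`C ξ` below `β` are bounded by `maxL (β, γ) < α`, so `C ξ \ α = C ξ \ β`: both walks take the same
step. Hence the walk to `α` follows the walk to `β` until it reaches `β`, and then continues as the
walk from `β` to `α`.
-/

lemma diff_Iio_eq_of_sSup_inter_Iio_lt {ι : Type*} [ConditionallyCompleteLinearOrder ι]
    {S : Set ι} {α β : ι} (hαβ : α ≤ β) (h : sSup (S ∩ Iio β) < α) :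
    S \ Iio α = S \ Iio β := by
  refine Subset.antisymm ?_ (sdiff_subset_sdiff_right (Iio_subset_Iio hαβ))
  rintro x ⟨hxS, hxα⟩
  refine ⟨hxS, fun hxβ => hxα ?_⟩
  have hbdd : BddAbove (S ∩ Iio β) := ⟨β, fun _ hy => hy.2.le⟩
  exact (le_csSup hbdd ⟨hxS, hxβ⟩).trans_lt h

lemma bddAbove_maxL_set (C : Ordinal.{0} → Set Ordinal.{0})
    (Tr : Ordinal.{0} → Ordinal.{0} → Finset Ordinal.{0}) (β γ : Ordinal.{0}) :
    BddAbove {o : Ordinal | ∃ ξ ∈ Tr β γ, ξ ≠ β ∧ o = sSup (C ξ ∩ Iio β)} := by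
  refine Set.Finite.bddAbove <|
    ((Tr β γ).finite_toSet.image (fun ξ => sSup (C ξ ∩ Iio β))).subset ?_
  rintro o ⟨ξ, hξ, -, rfl⟩
  exact ⟨ξ, hξ, rfl⟩

section UpperTrace

variable {C : Ordinal.{0} → Set Ordinal.{0}} {Tr : Ordinal.{0} → Ordinal.{0} → Finset Ordinal.{0}}

lemma sSup_inter_Iio_le_maxL {β γ ξ : Ordinal.{0}} (hξ : ξ ∈ Tr β γ) (hξβ : ξ ≠ β) :
    sSup (C ξ ∩ Iio β) ≤ maxL C Tr β γ :=
  le_csSup (bddAbove_maxL_set C Tr β γ) ⟨ξ, hξ, hξβ, rfl⟩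

lemma maxL_mono {β γ γ' : Ordinal.{0}} (h : Tr β γ' ⊆ Tr β γ) :
    maxL C Tr β γ' ≤ maxL C Tr β γ := by
  refine csSup_le_csSup' (bddAbove_maxL_set C Tr β γ) ?_
  rintro o ⟨ξ, hξ, hξβ, rfl⟩
  exact ⟨ξ, h hξ, hξβ, rfl⟩

lemma sInf_diff_Iio_mem (hC : IsCSequence C) {β γ : Ordinal.{0}} (hβγ : β < γ)
    (hγ : γ < omega1) : sInf (C γ \ Iio β) ∈ C γ \ Iio β := by
  obtain ⟨η, hη, hβη⟩ := (hC γ hγ).2 β hβγ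
  exact csInf_mem ⟨η, hη, not_lt.2 hβη⟩

lemma mem_upperTrace_self (hTr : IsUpperTrace C Tr) {α β : Ordinal.{0}} (hαβ : α < β)
    (hβ : β < omega1) : β ∈ Tr α β := by
  rw [hTr.2 α β hαβ hβ]
  exact Finset.mem_insert_self _ _

end UpperTrace

theorem statement8_general (C : Ordinal → Set Ordinal) (hC : IsCSequence C)
    (Tr : Ordinal → Ordinal → Finset Ordinal) (hTr : IsUpperTrace C Tr) :
    ∀ α β γ, α < β → β < γ → γ < omega1 → maxL C Tr β γ < α →
      β ∈ Tr α γ ∧ Tr α γ = Tr α β ∪ Tr β γ := by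
  intro α β γ
  induction γ using WellFoundedLT.induction with
  | _ γ IH =>
  intro hαβ hβγ hγ hmax
  set γ' := sInf (C γ \ Iio β)
  obtain ⟨hγ'C, hβγ'⟩ : γ' ∈ C γ ∧ γ' ∉ Iio β := sInf_diff_Iio_mem hC hβγ hγ
  replace hβγ' : β ≤ γ' := not_lt.1 hβγ'
  have hγ'γ : γ' < γ := (hC γ hγ).1 γ' hγ'C
  have hTrβγ : Tr β γ = insert γ (Tr β γ') := hTr.2 β γ hβγ hγ
  have hTrαγ : Tr α γ = insert γ (Tr α γ') := by
    have hsSup : sSup (C γ ∩ Iio β) < α :=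
      (sSup_inter_Iio_le_maxL (hTrβγ ▸ Finset.mem_insert_self _ _) hβγ.ne').trans_lt hmax
    rw [hTr.2 α γ (hαβ.trans hβγ) hγ, diff_Iio_eq_of_sSup_inter_Iio_lt hαβ.le hsSup]
  have hγ' : β ∈ Tr α γ' ∧ Tr α γ' = Tr α β ∪ Tr β γ' := by
    rcases hβγ'.eq_or_lt with heq | hlt
    · have hβ := mem_upperTrace_self hTr hαβ (hβγ.trans hγ)
      rw [← heq, hTr.1 β]
      exact ⟨hβ, (Finset.union_eq_left.2 (Finset.singleton_subset_iff.2 hβ)).symm⟩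
    · refine IH γ' hγ'γ hαβ hlt (hγ'γ.trans hγ) ((maxL_mono ?_).trans_lt hmax)
      exact hTrβγ ▸ Finset.subset_insert _ _
  rw [hTrαγ, hTrβγ, Finset.union_insert, ← hγ'.2]
  exact ⟨Finset.mem_insert_of_mem hγ'.1, rfl⟩

/-- For a C-sequence on ω₁ satisfying (⋆): if `maxL (β, γ) < α` for `α < β < γ < ω₁`, then
`β ∈ Tr (α, γ)` and `Tr (α, γ) = Tr (α, β) ∪ Tr (β, γ)`. -/
theorem statement8 (C : Ordinal → Set Ordinal) (hC : IsCSequence C) (hstar : StarProperty C)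
    (Tr : Ordinal → Ordinal → Finset Ordinal) (hTr : IsUpperTrace C Tr) :
    ∀ α β γ, α < β → β < γ → γ < omega1 → maxL C Tr β γ < α →
      β ∈ Tr α γ ∧ Tr α γ = Tr α β ∪ Tr β γ :=
  statement8_general C hC Tr hTr
end
end

section
/- Let δ be an ordinal of cofinality ω₁ and let A be any nontrivial abelian group. Then there exists a nontrivial coherent family Φ = {φ_β : β → A | β < δ}. -/
/-!
Build, by transfinite recursion, finite-to-one maps `e β : β → ℕ` for `β < ω₁` that pairwise agree
modulo finite sets: enumerate `β` as `β₀, β₁, …` and let `e β` be `max (e βₙ) n` on the points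
first covered by `βₙ`. A trivialisation `f : ω₁ → ℕ` would be finite-to-one below every countable
ordinal, hence have finite fibres, which would make `ω₁` countable. Recording `e β ξ` as the
position of a single `a ≠ 0` in the `ξ`-th block of length `ω` gives an `A`-valued nontrivial
coherent family on `ω₁`, and reading it along a strictly increasing cofinal map `ω₁ → δ` moves it
to height `δ`.
-/

noncomputable section
open Ordinal Set

/-- `Φ` codes a coherent family of functions `φ_β = Φ β : β → A` (`β < δ`):
`φ_γ ↾ β =* φ_β` (agreement at all but finitely many arguments) for all `β ≤ γ < δ`. -/
def CoherentFam {A : Type*} (δ : Ordinal.{0}) (Φ : Ordinal.{0} → Ordinal.{0} → A) : Prop :=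
  ∀ β γ, β ≤ γ → γ < δ → {α : Ordinal | α < β ∧ Φ γ α ≠ Φ β α}.Finite

/-- The family coded by `Φ` is trivial: some `f : δ → A` satisfies `f ↾ β =* φ_β`
for all `β < δ`. -/
def TrivialFam {A : Type*} (δ : Ordinal.{0}) (Φ : Ordinal.{0} → Ordinal.{0} → A) : Prop :=
  ∃ f : Ordinal → A, ∀ β, β < δ → {α : Ordinal | α < β ∧ f α ≠ Φ β α}.Finite

theorem CoherentFam.finite_ne {A : Type*} {δ : Ordinal.{0}} {Φ : Ordinal.{0} → Ordinal.{0} → A}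
    (hΦ : CoherentFam δ Φ) {β γ : Ordinal.{0}} (hβ : β < δ) (hγ : γ < δ) :
    {α | α < β ∧ α < γ ∧ Φ β α ≠ Φ γ α}.Finite := by
  rcases le_total β γ with h | h
  · exact (hΦ β γ h hγ).subset fun α ⟨hαβ, _, hne⟩ => ⟨hαβ, hne.symm⟩
  · exact (hΦ γ β h hβ).subset fun α ⟨_, hαγ, hne⟩ => ⟨hαγ, hne⟩

theorem Ordinal.IsFundamentalSeq.exists_strictMonoOn {a o : Ordinal.{0}} {f : Iio a → Iio o}
    (hf : IsFundamentalSeq f) : ∃ g : Ordinal.{0} → Ordinal.{0},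
      StrictMonoOn g (Iio a) ∧ MapsTo g (Iio a) (Iio o) ∧ ∀ β < o, ∃ ξ < a, β ≤ g ξ := by
  refine ⟨fun ξ => if h : ξ < a then f ⟨ξ, h⟩ else 0, fun ξ hξ η hη hξη => ?_,
    fun ξ hξ => ?_, fun β hβ => ?_⟩
  · simp only [dif_pos (show ξ < a from hξ), dif_pos (show η < a from hη)]
    exact hf.strictMono (show (⟨ξ, hξ⟩ : Iio a) < ⟨η, hη⟩ from hξη)
  · simp only [dif_pos (show ξ < a from hξ)]
    exact (f _).2
  · obtain ⟨_, ⟨ξ, rfl⟩, hξ⟩ := hf.isCofinal_range ⟨β, hβ⟩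
    refine ⟨ξ, ξ.2, ?_⟩
    simp only [dif_pos (show (ξ : Ordinal) < a from ξ.2)]
    exact hξ

theorem exists_coherentFam_not_trivialFam_of_strictMonoOn {A : Type*} [Zero A]
    {c δ : Ordinal.{0}} {g : Ordinal.{0} → Ordinal.{0}} (hmono : StrictMonoOn g (Iio c))
    (hmaps : MapsTo g (Iio c) (Iio δ)) (hcof : ∀ β < δ, ∃ ξ < c, β ≤ g ξ)
    {Ψ : Ordinal.{0} → Ordinal.{0} → A} (hcoh : CoherentFam c Ψ) (hnt : ¬TrivialFam c Ψ) :
    ∃ Φ : Ordinal.{0} → Ordinal.{0} → A, CoherentFam δ Φ ∧ ¬TrivialFam δ Φ := by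
  classical
  choose! sel hsel_lt hsel using hcof
  have hinv : LeftInvOn (Function.invFunOn g (Iio c)) g (Iio c) := hmono.injOn.leftInvOn_invFunOn
  refine ⟨fun β α => if α ∈ g '' Iio c then Ψ (sel β) (Function.invFunOn g (Iio c) α) else 0,
    fun β γ hβγ hγ => ?_, fun ⟨F, hF⟩ => hnt ⟨F ∘ g, fun ζ hζ => ?_⟩⟩
  · have hβ := hβγ.trans_lt hγ
    refine ((hcoh.finite_ne (hsel_lt γ hγ) (hsel_lt β hβ)).image g).subset ?_
    rintro α ⟨hαβ, hne⟩
    by_cases hα : α ∈ g '' Iio c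
    · obtain ⟨ξ, hξ, rfl⟩ := hα
      simp only [mem_image_of_mem g hξ, if_true, hinv hξ] at hne
      have hlt : ∀ {η}, η < δ → g ξ < η → ξ < sel η := fun hη h =>
        (hmono.lt_iff_lt hξ (hsel_lt _ hη)).1 (h.trans_le (hsel _ hη))
      exact ⟨ξ, ⟨hlt hγ (hαβ.trans_le hβγ), hlt hβ hαβ, hne⟩, rfl⟩
    · simp [hα] at hne
  · have hζ' := hsel_lt (g ζ) (hmaps hζ)
    have hle : ζ ≤ sel (g ζ) := (hmono.le_iff_le hζ hζ').1 (hsel _ (hmaps hζ))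
    have hD : {ξ | ξ < ζ ∧ F (g ξ) ≠ Ψ (sel (g ζ)) ξ}.Finite := by
      refine Finite.of_finite_image ((hF _ (hmaps hζ)).subset ?_)
        (hmono.injOn.mono fun ξ hξ => hξ.1.trans hζ)
      rintro _ ⟨ξ, ⟨hξζ, hne⟩, rfl⟩
      have hξ : ξ ∈ Iio c := hξζ.trans hζ
      refine ⟨hmono hξ hζ hξζ, ?_⟩
      simpa only [mem_image_of_mem g hξ, if_true, hinv hξ] using hne
    refine (hD.union (hcoh ζ _ hle hζ')).subset ?_
    rintro ξ ⟨hξζ, hne⟩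
    by_cases h : Ψ (sel (g ζ)) ξ = Ψ ζ ξ
    · exact Or.inl ⟨hξζ, h ▸ hne⟩
    · exact Or.inr ⟨hξζ, h⟩

theorem countable_Iio_iff_lt_omega_one {β : Ordinal.{0}} : (Iio β).Countable ↔ β < ω₁ := by
  rw [← Cardinal.le_aleph0_iff_set_countable, Cardinal.mk_Iio_ordinal, Cardinal.lift_le_aleph0,
    Cardinal.lt_omega_iff_card_lt, ← Cardinal.succ_aleph0, Order.lt_succ_iff]

theorem finite_of_subset_Iio_omega_one {S : Set Ordinal.{0}} (hS : S ⊆ Iio ω₁)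
    (h : ∀ β < ω₁, (S ∩ Iio β).Finite) : S.Finite := by
  by_contra hinf
  let e := Set.Infinite.natEmbedding S hinf
  have he : ∀ n, (e n : Ordinal) + 1 < ω₁ := fun n =>
    (Cardinal.isSuccLimit_omega 1).add_one_lt (hS (e n).2)
  refine infinite_range_of_injective (Subtype.val_injective.comp e.injective)
    ((h _ (iSup_lt_omega_one he)).subset ?_)
  rintro _ ⟨n, rfl⟩
  exact ⟨(e n).2, (lt_add_one _).trans_le (Ordinal.le_iSup (fun n => (e n : Ordinal) + 1) n)⟩

theorem not_trivialFam_of_finite_le {e : Ordinal.{0} → Ordinal.{0} → ℕ}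
    (he : ∀ β < ω₁, ∀ k, {ξ | ξ < β ∧ e β ξ ≤ k}.Finite) : ¬TrivialFam ω₁ e := by
  rintro ⟨f, hf⟩
  have hfiber : ∀ k, {ξ | ξ < ω₁ ∧ f ξ = k}.Finite := fun k =>
    finite_of_subset_Iio_omega_one (fun ξ h => h.1) fun β hβ =>
      ((hf β hβ).union (he β hβ k)).subset fun ξ ⟨⟨_, hk⟩, hξ⟩ => by
        by_cases h : f ξ = e β ξ
        · exact Or.inr ⟨hξ, h ▸ hk.le⟩
        · exact Or.inl ⟨hξ, h⟩
  have hcover : Iio ω₁ ⊆ ⋃ k, {ξ | ξ < ω₁ ∧ f ξ = k} := fun ξ hξ => mem_iUnion.2 ⟨f ξ, hξ, rfl⟩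
  exact countable_Iio_iff_lt_omega_one.not.2 (lt_irrefl _)
    ((countable_iUnion fun k => (hfiber k).countable).mono hcover)

open Classical in
def ladder (β : Ordinal.{0}) : ℕ → Ordinal.{0} :=
  if h : (Iio β).Countable then enumerateCountable h 0 else fun _ => 0

theorem ladder_lt_of_lt {β ξ : Ordinal.{0}} {n : ℕ} (h : ξ < ladder β n) : ladder β n < β := by
  unfold ladder at *
  split_ifs at * with hβ
  · have := range_enumerateCountable_subset hβ 0 (mem_range_self n)
    exact this.resolve_left (ne_bot_of_gt h)
  · exact absurd h (not_lt_zero (a := ξ))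

theorem exists_ladder_eq {β γ : Ordinal.{0}} (hβ : β < ω₁) (hγ : γ < β) :
    ∃ n, ladder β n = γ := by
  have hc := countable_Iio_iff_lt_omega_one.2 hβ
  simpa [ladder, dif_pos hc] using subset_range_enumerate hc 0 hγ

theorem ladder_lt {β : Ordinal.{0}} (h0 : β ≠ 0) (hβ : β < ω₁) (n : ℕ) : ladder β n < β := by
  have hc := countable_Iio_iff_lt_omega_one.2 hβ
  have := range_enumerateCountable_subset hc 0 (mem_range_self n)
  simp only [ladder, dif_pos hc]
  rcases this with h | h
  · rw [h]; exact pos_iff_ne_zero.2 h0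
  · exact h

open Classical in
/-- Level `β` copies level `ladder β n`, raised to at least `n`, on the points first covered by
`ladder β n`; the raise keeps level `β` finite-to-one at the cost of finitely many changes below
each earlier level. -/
def coherentSeq (β ξ : Ordinal.{0}) : ℕ :=
  if h : ∃ n, ξ < ladder β n then max (coherentSeq (ladder β (Nat.find h)) ξ) (Nat.find h) else 0
termination_by β
decreasing_by exact ladder_lt_of_lt (Nat.find_spec h)

theorem finite_coherentSeq_le {β : Ordinal.{0}} (hβ : β < ω₁) (k : ℕ) :
    {ξ | ξ < β ∧ coherentSeq β ξ ≤ k}.Finite := by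
  induction β using WellFoundedLT.induction generalizing k with
  | _ β ih =>
  rcases eq_or_ne β 0 with rfl | h0
  · simp
  have hlt : ∀ ξ η, η < β → (∀ n, ladder β n ≤ ξ) → ¬ξ < η := fun ξ η hη hξ h => by
    obtain ⟨n, rfl⟩ := exists_ladder_eq hβ hη
    exact (hξ n).not_gt h
  have huncovered : {ξ | ξ < β ∧ ∀ n, ladder β n ≤ ξ}.Subsingleton :=
    fun ξ ⟨hξβ, hξ⟩ η ⟨hηβ, hη⟩ =>
      le_antisymm (not_lt.1 (hlt η ξ hξβ hη)) (not_lt.1 (hlt ξ η hηβ hξ))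
  have hlevel : ∀ n, {ξ | ξ < ladder β n ∧ coherentSeq (ladder β n) ξ ≤ k}.Finite := fun n =>
    ih _ (ladder_lt h0 hβ n) ((ladder_lt h0 hβ n).trans hβ) k
  refine (huncovered.finite.union ((finite_Iic k).biUnion fun n _ => hlevel n)).subset ?_
  rintro ξ ⟨hξβ, hξk⟩
  rw [coherentSeq] at hξk
  split_ifs at hξk with hcov
  · obtain ⟨hlev, hfind⟩ := max_le_iff.1 hξk
    exact Or.inr (mem_biUnion (x := Nat.find hcov) hfind ⟨Nat.find_spec hcov, hlev⟩)
  · exact Or.inl ⟨hξβ, fun n => not_lt.1 fun h => hcov ⟨n, h⟩⟩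

theorem coherentFam_coherentSeq : CoherentFam ω₁ coherentSeq := by
  intro γ β hγβ hβ
  induction β using WellFoundedLT.induction generalizing γ with
  | _ β ih =>
  have hcoh : CoherentFam β coherentSeq := fun γ' β' h h' => ih β' h' γ' h (h'.trans hβ)
  rcases hγβ.eq_or_lt with rfl | hγβ
  · simp
  have h0 : β ≠ 0 := ne_bot_of_gt hγβ
  obtain ⟨m, rfl⟩ := exists_ladder_eq hβ hγβ
  refine ((finite_Iic m).biUnion fun n _ =>
    (hcoh.finite_ne (ladder_lt h0 hβ n) (ladder_lt h0 hβ m)).union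
      (finite_coherentSeq_le ((ladder_lt h0 hβ n).trans hβ) m)).subset ?_
  rintro ξ ⟨hξ, hne⟩
  have hcov : ∃ n, ξ < ladder β n := ⟨m, hξ⟩
  rw [coherentSeq, dif_pos hcov] at hne
  refine mem_biUnion (x := Nat.find hcov) (Nat.find_min' hcov hξ) ?_
  by_cases hle : Nat.find hcov ≤ coherentSeq (ladder β (Nat.find hcov)) ξ
  · rw [max_eq_left hle] at hne
    exact Or.inl ⟨Nat.find_spec hcov, hξ, hne⟩
  · exact Or.inr ⟨Nat.find_spec hcov, by have := Nat.find_min' hcov hξ; omega⟩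

theorem not_trivialFam_coherentSeq : ¬TrivialFam ω₁ coherentSeq :=
  not_trivialFam_of_finite_le fun _ hβ => finite_coherentSeq_le hβ

theorem exists_omega0_mul_add_natCast (α : Ordinal) : ∃ (ξ : Ordinal) (k : ℕ), ω * ξ + k = α := by
  obtain ⟨k, hk⟩ := lt_omega0.1 (mod_lt α omega0_ne_zero)
  exact ⟨α / ω, k, hk ▸ div_add_mod α ω⟩

theorem omega0_mul_add_natCast_lt (ξ : Ordinal) (k : ℕ) : ω * ξ + k < ω * (ξ + 1) := by
  rw [mul_add_one]
  exact add_lt_add_right (natCast_lt_omega0 k) _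

theorem omega0_mul_add_natCast_div (ξ : Ordinal) (k : ℕ) : (ω * ξ + k) / ω = ξ := by
  rw [mul_add_div _ omega0_ne_zero, div_eq_zero_of_lt (natCast_lt_omega0 k), add_zero]

/-- The `ξ`-th block `[ω * ξ, ω * ξ + ω)` of level `β` encodes the value `e β ξ` as the position
of its only entry `a`. -/
def blockCode {A : Type*} [Zero A] (a : A) (e : Ordinal.{0} → Ordinal.{0} → ℕ)
    (β α : Ordinal.{0}) : A :=
  if α % ω = e β (α / ω) then a else 0

section blockCode

variable {A : Type*} [Zero A] {a : A} {e : Ordinal.{0} → Ordinal.{0} → ℕ} {δ : Ordinal.{0}}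

theorem blockCode_omega0_mul_add (a : A) (e : Ordinal.{0} → Ordinal.{0} → ℕ) (β ξ : Ordinal.{0})
    (k : ℕ) : blockCode a e β (ω * ξ + k) = if k = e β ξ then a else 0 := by
  simp only [blockCode, omega0_mul_add_natCast_div, mul_add_mod_self,
    mod_eq_of_lt (natCast_lt_omega0 k), Nat.cast_inj]

theorem CoherentFam.blockCode (he : CoherentFam δ e) (a : A) :
    CoherentFam δ (blockCode a e) := by
  intro β γ hβγ hγ
  refine (((he β γ hβγ hγ).image fun ξ => ω * ξ + e γ ξ).union
    ((he β γ hβγ hγ).image fun ξ => ω * ξ + e β ξ)).subset ?_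
  rintro α ⟨hαβ, hne⟩
  obtain ⟨ξ, k, rfl⟩ := exists_omega0_mul_add_natCast α
  have hξβ : ξ < β := ((le_mul_right ξ omega0_pos).trans le_self_add).trans_lt hαβ
  rw [blockCode_omega0_mul_add, blockCode_omega0_mul_add] at hne
  have hdiff : e γ ξ ≠ e β ξ := fun h => hne (by rw [h])
  by_cases hk : k = e γ ξ
  · exact Or.inl ⟨ξ, ⟨hξβ, hdiff⟩, by rw [hk]⟩
  by_cases hk' : k = e β ξ
  · exact Or.inr ⟨ξ, ⟨hξβ, hdiff⟩, by rw [hk']⟩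
  · simp [hk, hk'] at hne

theorem not_trivialFam_blockCode (ha : a ≠ 0) (hδ : ∀ γ < δ, ω * γ < δ)
    (hcoh : CoherentFam δ e) (hnt : ¬TrivialFam δ e) : ¬TrivialFam δ (blockCode a e) := by
  classical
  rintro ⟨f, hf⟩
  set decode : Ordinal.{0} → ℕ :=
    fun ξ => if h : ∃ k : ℕ, f (ω * ξ + k) = a then Nat.find h else 0 with hdecode
  refine hnt ⟨decode, fun γ hγ => ?_⟩
  have hγ' := hδ γ hγ
  have hD : {ξ | ξ < γ ∧ decode ξ ≠ e (ω * γ) ξ}.Finite := by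
    refine ((hf _ hγ').image (· / ω)).subset ?_
    rintro ξ ⟨hξγ, hne⟩
    have hblock : ∀ k : ℕ, ω * ξ + k < ω * γ := fun k =>
      (omega0_mul_add_natCast_lt ξ k).trans_le (mul_le_mul_right (Order.add_one_le_of_lt hξγ) ω)
    by_cases hk : f (ω * ξ + e (ω * γ) ξ) = a
    · have h : ∃ k : ℕ, f (ω * ξ + k) = a := ⟨_, hk⟩
      simp only [hdecode, dif_pos h] at hne
      refine ⟨ω * ξ + Nat.find h, ⟨hblock _, ?_⟩, omega0_mul_add_natCast_div _ _⟩
      rw [blockCode_omega0_mul_add, if_neg hne, Nat.find_spec h]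
      exact ha
    · refine ⟨ω * ξ + e (ω * γ) ξ, ⟨hblock _, ?_⟩, omega0_mul_add_natCast_div _ _⟩
      rwa [blockCode_omega0_mul_add, if_pos rfl]
  refine (hD.union (hcoh γ (ω * γ) (le_mul_right γ omega0_pos) hγ')).subset ?_
  rintro ξ ⟨hξ, hne⟩
  by_cases h : e (ω * γ) ξ = e γ ξ
  · exact Or.inl ⟨hξ, h ▸ hne⟩
  · exact Or.inr ⟨hξ, h⟩

end blockCode

/-- Corollary: for any ordinal `δ` of cofinality `ω₁` and any nontrivial abelian group `A`
there is a nontrivial coherent family of `A`-valued functions of height `δ`. -/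
theorem statement10 (δ : Ordinal) (hδ : Ordinal.cof δ = Cardinal.aleph 1)
    (A : Type*) [AddCommGroup A] (hA : ∃ a : A, a ≠ 0) :
    ∃ Φ : Ordinal → Ordinal → A, CoherentFam δ Φ ∧ ¬TrivialFam δ Φ := by
  obtain ⟨a, ha⟩ := hA
  obtain ⟨f, hf⟩ := exists_isFundamentalSeq (o := δ) (by rw [hδ, Cardinal.ord_aleph])
  obtain ⟨g, hmono, hmaps, hcof⟩ := hf.exists_strictMonoOn
  have hmul : ∀ γ < ω₁, ω * γ < ω₁ := fun γ => isPrincipal_mul_omega 1 omega0_lt_omega_one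
  exact exists_coherentFam_not_trivialFam_of_strictMonoOn hmono hmaps hcof
    (coherentFam_coherentSeq.blockCode a)
    (not_trivialFam_blockCode ha hmul coherentFam_coherentSeq not_trivialFam_coherentSeq)
end
end

section
/- For any abelian group A, any positive integer n, and any ordinal δ of cofinality less than ℵ_n (including δ a successor ordinal), every n-coherent A-valued family of height δ is n-trivial. -/
/-!
Write `d` for the alternating-sum coboundary `altSum`. For an ordinal `a`, the cone operator
`cone a Φ : t ↦ ±Φ (t, a)` is a contracting homotopy, `d (cone a Φ) + cone a (d Φ) = Φ`, so if
`Φ` is coherent (`d Φ =* 0`) then `cone a Φ` trivializes `Φ` below `a`. This settles successor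
heights. At a limit height `δ`, fix a strictly increasing cofinal sequence `(e ζ)_{ζ < cf δ}`.
For `n = 1` the sequence has length `ω` and the trivializing function is glued pointwise from
the `φ_{e k}`: below `e k` it differs from `φ_{e k}` only at the finitely many points where some
earlier `φ_{e j}` disagrees with `φ_{e k}`. For `n > 1` the trivializations `cone (e ζ) Φ` are
corrected by coboundaries `d E_ζ`, by transfinite recursion, so that they agree (`=*`) below
`e ζ`. At a limit stage `ν` the required correction trivializes a coherent family of dimension
`n - 1` and height `sup_{ζ < ν} e ζ`, whose cofinality is `cf ν < ℵ_{n-1}`, so it exists by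
induction. Gluing the corrected trivializations tuple by tuple, each tuple taking the least
`e ζ` above it, yields a trivialization of `Φ`.
-/

noncomputable section
open Ordinal Set

/-- The alternating sum `Σ_{i ≤ n} (-1)^i Ψ (β^i) (ξ)`, where `β^i` is the tuple `β` with its
`i`-th coordinate deleted. -/
def altSum {A : Type*} [AddCommGroup A] {n : ℕ}
    (Ψ : (Fin n → Ordinal.{0}) → Ordinal.{0} → A) (β : Fin (n + 1) → Ordinal.{0})
    (ξ : Ordinal.{0}) : A :=
  ∑ i : Fin (n + 1), ((-1 : ℤ) ^ (i : ℕ)) • Ψ (β ∘ i.succAbove) ξ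

/-- `Φ` codes an `n`-coherent `A`-valued family of height `δ`: writing `φ_β̄ = Φ β̄` (a
function read on `Iio (β̄ 0)`) for increasing `n`-tuples `β̄` from `δ`, one has
`Σ_{i ≤ n} (-1)^i φ_{β̄^i} =* 0` (i.e. at all but finitely many arguments) for every
increasing `(n+1)`-tuple `β̄` from `δ`.  For `n = 0`, `Φ` codes a single function which is
required to have finite support below every `α < δ`. -/
def NCoherent {A : Type*} [AddCommGroup A] {n : ℕ} (δ : Ordinal.{0})
    (Φ : (Fin n → Ordinal.{0}) → Ordinal.{0} → A) : Prop :=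
  ∀ β : Fin (n + 1) → Ordinal, StrictMono β → (∀ i, β i < δ) →
    {ξ : Ordinal | ξ < β 0 ∧ altSum Φ β ξ ≠ 0}.Finite

/-- `Ψ` is an `(n+1)`-trivialization of the `(n+1)`-dimensional family `Φ` of height `δ`:
`Σ_{i ≤ n} (-1)^i ψ_{β̄^i} =* φ_β̄` for every increasing `(n+1)`-tuple `β̄` from `δ`.
For `n = 0` this says exactly that the single function `ψ = Ψ ∅` satisfies
`ψ ↾ β =* φ_β` for all `β < δ`. -/
def IsNTrivialization {A : Type*} [AddCommGroup A] {n : ℕ} (δ : Ordinal.{0})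
    (Φ : (Fin (n + 1) → Ordinal.{0}) → Ordinal.{0} → A)
    (Ψ : (Fin n → Ordinal.{0}) → Ordinal.{0} → A) : Prop :=
  ∀ β : Fin (n + 1) → Ordinal, StrictMono β → (∀ i, β i < δ) →
    {ξ : Ordinal | ξ < β 0 ∧ altSum Ψ β ξ ≠ Φ β ξ}.Finite

/-- `n`-triviality of an `n`-dimensional family of height `δ`: for `n = 0`, finite support;
for `n ≥ 1`, the existence of an `n`-trivialization. -/
def NTrivial {A : Type*} [AddCommGroup A] :
    ∀ {n : ℕ}, Ordinal.{0} → ((Fin n → Ordinal.{0}) → Ordinal.{0} → A) → Prop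
  | 0, δ, Φ => {ξ : Ordinal | ξ < δ ∧ Φ Fin.elim0 ξ ≠ 0}.Finite
  | _ + 1, δ, Φ => ∃ Ψ, IsNTrivialization δ Φ Ψ

namespace Fin

theorem strictMono_snoc {α : Type*} [Preorder α] {k : ℕ} {t : Fin k → α} {a : α}
    (ht : StrictMono t) (hta : ∀ j, t j < a) : StrictMono (snoc t a : Fin (k + 1) → α) := by
  intro x y hxy
  induction y using lastCases with
  | last =>
    induction x using lastCases with
    | last => exact absurd hxy (lt_irrefl _)
    | cast x => simpa using hta x
  | cast y =>
    induction x using lastCases with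
    | last => exact absurd hxy (not_lt.2 (le_last _))
    | cast x => simpa using ht (castSucc_lt_castSucc_iff.1 hxy)

theorem snoc_comp_castSucc_succAbove {α : Type*} {k : ℕ} (t : Fin (k + 1) → α) (a : α)
    (i : Fin (k + 1)) :
    (snoc t a : Fin (k + 2) → α) ∘ i.castSucc.succAbove = snoc (t ∘ i.succAbove) a := by
  funext x
  induction x using lastCases with
  | last => simp [succAbove_of_le_castSucc _ _ (castSucc_le_castSucc_iff.2 (le_last i))]
  | cast y => simp [castSucc_succAbove_castSucc]

end Fin

namespace Ordinal

open Order Cardinal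

theorem exists_strictMonoOn_cofinal {δ : Ordinal} (hδ : IsSuccLimit δ) :
    ∃ e : Ordinal → Ordinal, StrictMonoOn e (Iio δ.cof.ord) ∧ (∀ ζ < δ.cof.ord, e ζ < δ) ∧
      ∀ b < δ, ∃ ζ < δ.cof.ord, b < e ζ := by
  obtain ⟨f, hf⟩ := exists_isFundamentalSeq (o := δ) rfl
  refine ⟨fun ζ => if h : ζ < δ.cof.ord then f ⟨ζ, h⟩ else 0, fun x hx y hy hxy => ?_,
    fun ζ hζ => ?_, fun b hb => ?_⟩
  · simp only [mem_Iio] at hx hy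
    simp only [dif_pos hx, dif_pos hy]
    exact hf.strictMono (show (⟨x, hx⟩ : Iio _) < ⟨y, hy⟩ from hxy)
  · simp only [dif_pos hζ]
    exact (f ⟨ζ, hζ⟩).2
  · obtain ⟨_, ⟨ζ, rfl⟩, hζ⟩ := hf.isCofinal_range ⟨succ b, hδ.succ_lt hb⟩
    refine ⟨ζ, ζ.2, ?_⟩
    simp only [dif_pos (mem_Iio.1 ζ.2)]
    exact succ_le_iff.1 (show succ b ≤ f ζ from hζ)

theorem exists_strictMono_nat_cofinal {δ : Ordinal} (hδ : IsSuccLimit δ) (hcof : δ.cof ≤ ℵ₀) :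
    ∃ e : ℕ → Ordinal, StrictMono e ∧ (∀ k, e k < δ) ∧ ∀ b < δ, ∃ k, b < e k := by
  obtain ⟨e, he, heδ, hecof⟩ := exists_strictMonoOn_cofinal hδ
  have hω : δ.cof.ord = ω := by
    rw [hcof.antisymm (aleph0_le_cof_iff.2 (one_lt_cof_iff.2 hδ)), ord_aleph0]
  rw [hω] at he heδ hecof
  refine ⟨fun k => e k, fun k l hkl => ?_, fun k => heδ k (natCast_lt_omega0 k), fun b hb => ?_⟩
  · exact he (natCast_lt_omega0 k) (natCast_lt_omega0 l) (by exact_mod_cast hkl)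
  · obtain ⟨ζ, hζ, hbζ⟩ := hecof b hb
    obtain ⟨k, rfl⟩ := lt_omega0.1 hζ
    exact ⟨k, hbζ⟩

theorem exists_pairwise_of_extend {X : Type*} [Nonempty X] {θ : Ordinal}
    (R : Ordinal → Ordinal → X → X → Prop)
    (hR : ∀ ν < θ, ∀ E : Ordinal → X, (∀ ζ₁ < ν, ∀ ζ₀ < ζ₁, R ζ₀ ζ₁ (E ζ₀) (E ζ₁)) →
      ∃ x, ∀ ζ < ν, R ζ ν (E ζ) x) :
    ∃ E : Ordinal → X, ∀ ζ₁ < θ, ∀ ζ₀ < ζ₁, R ζ₀ ζ₁ (E ζ₀) (E ζ₁) := by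
  let E : Ordinal → X := lt_wf.fix fun ν rec =>
    Classical.epsilon fun x => ∀ ζ (h : ζ < ν), R ζ ν (rec ζ h) x
  have hE (ν : Ordinal) : E ν = Classical.epsilon fun x => ∀ ζ < ν, R ζ ν (E ζ) x :=
    WellFounded.fix_eq _ _ _
  refine ⟨E, fun ν => ?_⟩
  induction ν using WellFoundedLT.induction with
  | _ ν ih =>
    intro hν
    rw [hE ν]
    exact Classical.epsilon_spec (hR ν hν E fun ζ₁ h₁ => ih ζ₁ h₁ (h₁.trans hν))

end Ordinal

namespace Coherence

open Order Cardinal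

variable {A : Type*} [AddCommGroup A]

abbrev Family (A : Type*) (k : ℕ) := (Fin k → Ordinal.{0}) → Ordinal.{0} → A

def altSumHom (k : ℕ) : Family A k →+ Family A (k + 1) :=
  AddMonoidHom.mk' altSum fun F G => by
    ext β ξ
    simp [altSum, Finset.sum_add_distrib]

theorem altSum_add {k : ℕ} (F G : Family A k) : altSum (F + G) = altSum F + altSum G :=
  map_add (altSumHom k) F G

theorem altSum_sub {k : ℕ} (F G : Family A k) : altSum (F - G) = altSum F - altSum G :=
  map_sub (altSumHom k) F G

theorem altSum_zsmul {k : ℕ} (z : ℤ) (F : Family A k) : altSum (z • F) = z • altSum F :=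
  map_zsmul (altSumHom k) z F

theorem altSum_congr_faces {k : ℕ} {F G : Family A k} {β : Fin (k + 1) → Ordinal}
    (h : ∀ i : Fin (k + 1), F (β ∘ i.succAbove) = G (β ∘ i.succAbove)) :
    altSum F β = altSum G β := by
  funext ξ
  simp only [altSum, h]

theorem altSum_eq_of_faces_eq_zero {k : ℕ} {F : Family A k} {β : Fin (k + 1) → Ordinal}
    (h : ∀ i ≠ Fin.last k, F (β ∘ i.succAbove) = 0) :
    altSum F β = (-1 : ℤ) ^ k • F (Fin.init β) := by
  funext ξ
  rw [altSum, Finset.sum_eq_single (Fin.last k) (fun i _ hi => by simp [h i hi]) (by simp)]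
  simp [Function.comp_def]
  rfl

theorem altSum_snoc {k : ℕ} (F : Family A (k + 1)) (t : Fin (k + 1) → Ordinal) (a : Ordinal) :
    altSum F (Fin.snoc t a) =
      altSum (fun s => F (Fin.snoc s a)) t + (-1 : ℤ) ^ (k + 1) • F t := by
  funext ξ
  simp [altSum, Fin.sum_univ_castSucc, Fin.snoc_comp_castSucc_succAbove, Fin.succAbove_last,
    Fin.snoc_comp_castSucc]

theorem neg_one_pow_zsmul_neg_one_pow_zsmul (k : ℕ) (x : A) :
    (-1 : ℤ) ^ k • (-1 : ℤ) ^ k • x = x := by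
  rw [smul_smul, ← mul_pow, neg_one_mul, neg_neg, one_pow, one_smul]

-- The sign `(-1) ^ k` is what makes `cone a` a contracting homotopy for `altSum`.
def cone {k : ℕ} (a : Ordinal) (F : Family A (k + 1)) : Family A k :=
  (-1 : ℤ) ^ k • fun t => F (Fin.snoc t a)

theorem cone_sub {k : ℕ} (a : Ordinal) (F G : Family A (k + 1)) :
    cone a (F - G) = cone a F - cone a G := by
  simp only [cone, ← smul_sub]
  rfl

theorem altSum_cone_add_cone_altSum {k : ℕ} (a : Ordinal) (F : Family A (k + 1)) :
    altSum (cone a F) + cone a (altSum F) = F := by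
  funext t ξ
  have h := congrFun (altSum_snoc F t a) ξ
  simp only [cone, altSum_zsmul, Pi.add_apply, Pi.smul_apply] at h ⊢
  rw [h, smul_add, neg_one_pow_zsmul_neg_one_pow_zsmul, pow_succ, mul_neg_one, neg_smul]
  abel

theorem altSum_altSum : ∀ {k : ℕ} (F : Family A k), altSum (altSum F) = 0
  | 0, F => by
    funext β ξ
    simp [altSum, Fin.sum_univ_two, Subsingleton.elim (α := Fin 0 → Ordinal) _ Fin.elim0]
  | k + 1, F => by
    -- By the homotopy formula `cone a (d d F) = d d (cone a F)`, and every tuple ends in some `a`.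
    have hcone (a : Ordinal) : cone a (altSum (altSum F)) = 0 := by
      have h := altSum_cone_add_cone_altSum a (altSum F)
      rw [eq_sub_of_add_eq' (altSum_cone_add_cone_altSum a F), altSum_sub, altSum_altSum] at h
      simpa using h
    funext β ξ
    have h := congrFun (congrFun (hcone (β (Fin.last _))) (Fin.init β)) ξ
    simp only [cone, Pi.smul_apply, Pi.zero_apply, Fin.snoc_init_self] at h
    rw [← neg_one_pow_zsmul_neg_one_pow_zsmul (k + 2) (altSum _ β ξ), h, smul_zero,
      Pi.zero_apply, Pi.zero_apply]

def almostZero {k : ℕ} (c : Ordinal.{0}) : AddSubgroup (Family A (k + 1)) where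
  carrier := {F | ∀ β : Fin (k + 1) → Ordinal, StrictMono β → (∀ i, β i < c) →
    {ξ | ξ < β 0 ∧ F β ξ ≠ 0}.Finite}
  zero_mem' _ _ _ := by simp
  add_mem' {F G} hF hG β hβ hβc :=
    ((hF β hβ hβc).union (hG β hβ hβc)).subset fun ξ ⟨hξ, hne⟩ => by
      by_contra! h
      simp_all
  neg_mem' {F} hF β hβ hβc := by simpa using hF β hβ hβc

theorem almostZero_antitone {k : ℕ} : Antitone (almostZero (A := A) (k := k)) :=
  fun _ _ hcc' _ hF β hβ hβc => hF β hβ fun i => (hβc i).trans_le hcc'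

theorem mem_almostZero_of_cofinal {k : ℕ} {c : Ordinal} {F : Family A (k + 1)}
    (h : ∀ b < c, ∃ c', b < c' ∧ F ∈ almostZero c') : F ∈ almostZero c := by
  intro β hβ hβc
  obtain ⟨c', hc', hF⟩ := h _ (hβc (Fin.last k))
  exact hF β hβ fun i => (hβ.monotone (Fin.le_last i)).trans_lt hc'

theorem altSum_mem_almostZero {k : ℕ} {c : Ordinal} {F : Family A (k + 1)}
    (hF : F ∈ almostZero c) : altSum F ∈ almostZero c := by
  intro β hβ hβc
  refine (Set.finite_iUnion fun i : Fin (k + 2) =>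
    hF (β ∘ i.succAbove) (hβ.comp (Fin.strictMono_succAbove i)) fun j => hβc _).subset ?_
  rintro ξ ⟨hξ, hne⟩
  by_contra! h
  simp only [Set.mem_iUnion, Set.mem_ofPred_eq, not_exists, not_and, not_not] at h
  refine hne (Finset.sum_eq_zero fun i _ => ?_)
  rw [h i (hξ.trans_le (hβ.monotone (Fin.zero_le _))), smul_zero]

theorem cone_mem_almostZero {k : ℕ} {a c : Ordinal} {F : Family A (k + 2)}
    (hF : F ∈ almostZero c) (hac : a < c) : cone a F ∈ almostZero a := by
  intro t ht hta
  have hsnoc : ∀ i, (Fin.snoc t a : Fin (k + 2) → Ordinal) i < c := fun i => by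
    induction i using Fin.lastCases with
    | last => simpa using hac
    | cast j => simpa using (hta j).trans hac
  refine (hF _ (Fin.strictMono_snoc ht hta) hsnoc).subset
    fun ξ ⟨hξ, hne⟩ => ⟨?_, fun h => hne ?_⟩
  · show ξ < (Fin.snoc t a : Fin (k + 2) → Ordinal) (Fin.castSucc 0)
    rwa [Fin.snoc_castSucc]
  · simp [cone, h]

theorem altSum_cone_sub_mem_almostZero {k : ℕ} {a c : Ordinal} {Φ : Family A (k + 1)}
    (hΦ : altSum Φ ∈ almostZero c) (hac : a < c) : altSum (cone a Φ) - Φ ∈ almostZero a := by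
  rw [eq_sub_of_add_eq (altSum_cone_add_cone_altSum a Φ), sub_sub_cancel_left]
  exact neg_mem (cone_mem_almostZero hΦ hac)

theorem cone_sub_cone_sub_altSum_mem_almostZero {k : ℕ} {a b c : Ordinal}
    {Φ : Family A (k + 2)} (hΦ : altSum Φ ∈ almostZero c) (hab : a < b) (hbc : b < c) :
    cone b Φ - cone a Φ - altSum (cone a (cone b Φ)) ∈ almostZero a := by
  have h : cone b Φ - cone a Φ - altSum (cone a (cone b Φ)) = -cone a (cone b (altSum Φ)) := by
    rw [eq_sub_of_add_eq (altSum_cone_add_cone_altSum a (cone b Φ)),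
      eq_sub_of_add_eq (altSum_cone_add_cone_altSum b Φ), cone_sub]
    abel
  rw [h]
  exact neg_mem (cone_mem_almostZero (cone_mem_almostZero hΦ hbc) hab)

theorem exists_trivialization_succ {k : ℕ} {γ : Ordinal} {Φ : Family A (k + 1)}
    (hΦ : altSum Φ ∈ almostZero (succ γ)) :
    ∃ Ψ : Family A k, altSum Ψ - Φ ∈ almostZero (succ γ) := by
  classical
  set Ψ : Family A k := fun t => if ∀ j, t j < γ then cone γ Φ t else 0
  refine ⟨Ψ, fun β hβ hβγ => ?_⟩
  by_cases hb : ∀ i, β i < γ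
  · have hfaces : altSum Ψ β = altSum (cone γ Φ) β :=
      altSum_congr_faces fun i => if_pos fun j => hb _
    simpa only [Pi.sub_apply, hfaces] using
      altSum_cone_sub_mem_almostZero hΦ (lt_succ γ) β hβ hb
  · simp only [not_forall, not_lt] at hb
    obtain ⟨i₀, hi₀⟩ := hb
    have hlast : β (Fin.last k) = γ :=
      le_antisymm (lt_succ_iff.1 (hβγ _)) (hi₀.trans (hβ.monotone (Fin.le_last i₀)))
    have hface : ∀ i ≠ Fin.last k, Ψ (β ∘ i.succAbove) = 0 := fun i hi => by
      obtain ⟨j, hj⟩ := Fin.exists_succAbove_eq (Ne.symm hi)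
      exact if_neg fun h => (h j).ne (by simp [hj, hlast])
    have hinit : Ψ (Fin.init β) = cone γ Φ (Fin.init β) :=
      if_pos fun j => hlast ▸ hβ (Fin.castSucc_lt_last j)
    convert Set.finite_empty
    ext ξ
    simp [altSum_eq_of_faces_eq_zero hface, hinit, cone, neg_one_pow_zsmul_neg_one_pow_zsmul,
      ← hlast]

theorem finite_ne_of_altSum_mem_almostZero {δ a c : Ordinal} {Φ : Family A 1}
    (hΦ : altSum Φ ∈ almostZero δ) (hac : a < c) (hc : c < δ) :
    {ξ | ξ < a ∧ Φ (fun _ => c) ξ ≠ Φ (fun _ => a) ξ}.Finite := by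
  convert altSum_cone_sub_mem_almostZero hΦ hc (fun _ => a) (fun i j h => absurd h (by simp))
    (fun _ => hac) using 4 with ξ
  have hsnoc : (Fin.snoc ((fun _ => a) ∘ Fin.succ) c : Fin 1 → Ordinal) = fun _ => c :=
    funext fun i => by rw [Fin.fin_one_eq_zero i]; rfl
  simp [altSum, cone, sub_ne_zero, hsnoc]

theorem exists_trivialization_one_of_isSuccLimit {δ : Ordinal} (hδ : IsSuccLimit δ)
    (hcof : δ.cof ≤ ℵ₀) {Φ : Family A 1} (hΦ : altSum Φ ∈ almostZero δ) :
    ∃ Ψ : Family A 0, altSum Ψ - Φ ∈ almostZero δ := by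
  obtain ⟨e, he, heδ, hecof⟩ := exists_strictMono_nat_cofinal hδ hcof
  set Ψ : Family A 0 := fun _ ξ => Φ (fun _ => e (sInf {k | ξ < e k})) ξ
  refine ⟨Ψ, mem_almostZero_of_cofinal fun b hb => ?_⟩
  obtain ⟨k, hbk⟩ := hecof b hb
  refine ⟨e k, hbk, fun β _ hβk => ?_⟩
  have hβ : β = fun _ => β 0 := funext fun i => by rw [Fin.fin_one_eq_zero i]
  refine ((finite_ne_of_altSum_mem_almostZero hΦ (hβk 0) (heδ k)).union
    ((Set.finite_Iio k).biUnion fun j hj =>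
      finite_ne_of_altSum_mem_almostZero hΦ (he hj) (heδ k))).subset ?_
  rintro ξ ⟨hξ, hne⟩
  obtain ⟨l, hΨ, hl, hlk⟩ : ∃ l, (∀ t, Ψ t ξ = Φ (fun _ => e l) ξ) ∧ ξ < e l ∧ l ≤ k :=
    ⟨_, fun _ => rfl, Nat.sInf_mem (s := {k | ξ < e k}) ⟨k, hξ.trans (hβk 0)⟩,
      Nat.sInf_le (hξ.trans (hβk 0))⟩
  have hne' : Φ (fun _ => e l) ξ ≠ Φ (fun _ => β 0) ξ := by
    simpa [altSum, hΨ, sub_ne_zero, ← hβ] using hne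
  rcases hlk.lt_or_eq with hlk | rfl
  · by_cases h : Φ (fun _ => e k) ξ = Φ (fun _ => e l) ξ
    · exact Or.inl ⟨hξ, h ▸ hne'⟩
    · exact Or.inr (Set.mem_biUnion hlk ⟨hl, h⟩)
  · exact Or.inl ⟨hξ, hne'⟩

-- A tuple below no `e ζ` reads level `sInf ∅ = 0`; such tuples never matter.
def glue {k : ℕ} (e : Ordinal.{0} → Ordinal.{0}) (G : Ordinal.{0} → Family A (k + 1)) :
    Family A (k + 1) :=
  fun t => G (sInf {ζ | ∀ j, t j < e ζ}) t

theorem glue_sub_mem_almostZero {k : ℕ} {e : Ordinal → Ordinal}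
    {G : Ordinal → Family A (k + 1)} {ν ζ : Ordinal}
    (hG : ∀ ζ₁ < ν, ∀ ζ₀ < ζ₁, G ζ₁ - G ζ₀ ∈ almostZero (e ζ₀)) (hζ : ζ < ν) :
    glue e G - G ζ ∈ almostZero (e ζ) := by
  intro t ht htζ
  obtain ⟨z, hglue, hzt, hzζ⟩ : ∃ z, glue e G t = G z t ∧ (∀ j, t j < e z) ∧ z ≤ ζ :=
    ⟨_, rfl, csInf_mem (s := {ζ | ∀ j, t j < e ζ}) ⟨ζ, htζ⟩, csInf_le' htζ⟩
  rcases hzζ.lt_or_eq with hz | rfl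
  · refine (neg_mem (hG ζ hζ z hz) t ht hzt).subset fun ξ ⟨hξ, hne⟩ => ⟨hξ, ?_⟩
    simpa [hglue] using hne
  · convert Set.finite_empty
    ext ξ
    simp [hglue]

theorem altSum_glue_sub_mem_almostZero {k : ℕ} {e : Ordinal → Ordinal}
    {G : Ordinal → Family A (k + 1)} {H : Family A (k + 2)} {ν c : Ordinal}
    (hG : ∀ ζ₁ < ν, ∀ ζ₀ < ζ₁, G ζ₁ - G ζ₀ ∈ almostZero (e ζ₀))
    (hH : ∀ ζ < ν, altSum (G ζ) - H ∈ almostZero (e ζ)) (hcof : ∀ b < c, ∃ ζ < ν, b < e ζ) :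
    altSum (glue e G) - H ∈ almostZero c := by
  refine mem_almostZero_of_cofinal fun b hb => ?_
  obtain ⟨ζ, hζ, hbζ⟩ := hcof b hb
  refine ⟨e ζ, hbζ, ?_⟩
  have h := add_mem (altSum_mem_almostZero (glue_sub_mem_almostZero hG hζ)) (hH ζ hζ)
  rwa [altSum_sub, sub_add_sub_cancel] at h

theorem exists_altSum_sub_mem_almostZero {k : ℕ} {ν : Ordinal.{0}}
    {e : Ordinal.{0} → Ordinal.{0}} (hν : IsSuccLimit ν) (he : StrictMonoOn e (Iio ν))
    (IH : ∀ {Φ' : Family A (k + 1)}, altSum Φ' ∈ almostZero (⨆ ζ : Iio ν, e ζ) →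
      ∃ Ψ', altSum Ψ' - Φ' ∈ almostZero (⨆ ζ : Iio ν, e ζ))
    {w : Ordinal.{0} → Family A k}
    (hw : ∀ ζ₁ < ν, ∀ ζ₀ < ζ₁, altSum (w ζ₁) - altSum (w ζ₀) ∈ almostZero (e ζ₀)) :
    ∃ ε : Family A k, ∀ ζ < ν, altSum ε - altSum (w ζ) ∈ almostZero (e ζ) := by
  have hlt (ζ) (hζ : ζ < ν) : e ζ < ⨆ ζ : Iio ν, e ζ :=
    (he hζ (hν.succ_lt hζ) (lt_succ ζ)).trans_le
      (Ordinal.le_iSup (fun ζ : Iio ν => e ζ) ⟨_, hν.succ_lt hζ⟩)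
  have hcof (b) (hb : b < ⨆ ζ : Iio ν, e ζ) : ∃ ζ < ν, b < e ζ := by
    obtain ⟨ζ, hζ⟩ := Ordinal.lt_iSup_iff.1 hb
    exact ⟨ζ, ζ.2, hζ⟩
  obtain ⟨ε, hε⟩ := IH (Φ' := glue e fun ζ => altSum (w ζ)) (by
    simpa using altSum_glue_sub_mem_almostZero (H := 0) hw
      (fun ζ _ => by simp [altSum_altSum]) hcof)
  refine ⟨ε, fun ζ hζ => ?_⟩
  simpa using add_mem (almostZero_antitone (hlt ζ hζ).le hε) (glue_sub_mem_almostZero hw hζ)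

def trivBelow {k : ℕ} (Φ : Family A (k + 2)) (a : Ordinal) (x : Family A k) :
    Family A (k + 1) :=
  cone a Φ + altSum x

section TrivBelow

variable {k : ℕ} {a b c : Ordinal} {Φ : Family A (k + 2)}

theorem altSum_trivBelow_sub_mem_almostZero (hΦ : altSum Φ ∈ almostZero c) (hac : a < c)
    (x : Family A k) : altSum (trivBelow Φ a x) - Φ ∈ almostZero a := by
  simpa [trivBelow, altSum_add, altSum_altSum] using altSum_cone_sub_mem_almostZero hΦ hac

theorem trivBelow_sub_trivBelow_mem_almostZero (hΦ : altSum Φ ∈ almostZero c) (hab : a < b)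
    (hbc : b < c) (x : Family A k) :
    trivBelow Φ b (x - cone a (cone b Φ)) - trivBelow Φ a x ∈ almostZero a := by
  convert cone_sub_cone_sub_altSum_mem_almostZero hΦ hab hbc using 1
  simp only [trivBelow, altSum_sub]
  abel

end TrivBelow

section LimitStep

variable {m : ℕ} {δ : Ordinal.{0}} {Φ : Family A (m + 2)} {e : Ordinal.{0} → Ordinal.{0}}
  {E : Ordinal.{0} → Family A m}

theorem exists_extension_succ (hΦ : altSum Φ ∈ almostZero δ)
    (he : StrictMonoOn e (Iio δ.cof.ord)) (heδ : ∀ ζ < δ.cof.ord, e ζ < δ) {μ : Ordinal}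
    (hμ : succ μ < δ.cof.ord)
    (hE : ∀ ζ < μ, trivBelow Φ (e μ) (E μ) - trivBelow Φ (e ζ) (E ζ) ∈ almostZero (e ζ)) :
    ∃ x, ∀ ζ < succ μ,
      trivBelow Φ (e (succ μ)) x - trivBelow Φ (e ζ) (E ζ) ∈ almostZero (e ζ) := by
  have hμθ : μ < δ.cof.ord := (lt_succ μ).trans hμ
  have hC := trivBelow_sub_trivBelow_mem_almostZero hΦ (he hμθ hμ (lt_succ μ)) (heδ _ hμ) (E μ)
  refine ⟨E μ - cone (e μ) (cone (e (succ μ)) Φ), fun ζ hζ => ?_⟩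
  rcases (lt_succ_iff.1 hζ).lt_or_eq with hζμ | rfl
  · simpa using add_mem (almostZero_antitone (he (hζμ.trans hμθ) hμθ hζμ).le hC) (hE ζ hζμ)
  · exact hC

theorem exists_extension_of_isSuccLimit (hΦ : altSum Φ ∈ almostZero δ)
    (he : StrictMonoOn e (Iio δ.cof.ord)) (heδ : ∀ ζ < δ.cof.ord, e ζ < δ)
    (hcof : δ.cof ≤ ℵ_ (m + 1 : ℕ))
    (IH : ∀ {c : Ordinal} {Φ' : Family A (m + 1)}, c.cof ≤ ℵ_ m → altSum Φ' ∈ almostZero c →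
      ∃ Ψ', altSum Ψ' - Φ' ∈ almostZero c)
    {ν : Ordinal} (hν : IsSuccLimit ν) (hνθ : ν < δ.cof.ord)
    (hE : ∀ ζ₁ < ν, ∀ ζ₀ < ζ₁,
      trivBelow Φ (e ζ₁) (E ζ₁) - trivBelow Φ (e ζ₀) (E ζ₀) ∈ almostZero (e ζ₀)) :
    ∃ x, ∀ ζ < ν, trivBelow Φ (e ν) x - trivBelow Φ (e ζ) (E ζ) ∈ almostZero (e ζ) := by
  set w : Ordinal → Family A m := fun ζ => E ζ - cone (e ζ) (cone (e ν) Φ)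
  have hC (ζ) (hζ : ζ < ν) :
      trivBelow Φ (e ν) (w ζ) - trivBelow Φ (e ζ) (E ζ) ∈ almostZero (e ζ) :=
    trivBelow_sub_trivBelow_mem_almostZero hΦ (he (hζ.trans hνθ) hνθ hζ) (heδ ν hνθ) (E ζ)
  have hw : ∀ ζ₁ < ν, ∀ ζ₀ < ζ₁, altSum (w ζ₁) - altSum (w ζ₀) ∈ almostZero (e ζ₀) := by
    intro ζ₁ h₁ ζ₀ h₀
    have hle : e ζ₀ ≤ e ζ₁ := (he ((h₀.trans h₁).trans hνθ) (h₁.trans hνθ) h₀).le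
    convert add_mem (sub_mem (almostZero_antitone hle (hC ζ₁ h₁)) (hC ζ₀ (h₀.trans h₁)))
      (hE ζ₁ h₁ ζ₀ h₀) using 1
    simp only [trivBelow]
    abel
  have hsup : (⨆ ζ : Iio ν, e ζ).cof ≤ ℵ_ m := by
    rw [cof_iSup_Iio (fun x y hxy => he (x.2.trans hνθ) (y.2.trans hνθ) hxy)
      hν.isSuccPrelimit]
    rw [Nat.cast_succ, ← succ_aleph] at hcof
    exact (cof_le_card ν).trans (lt_succ_iff.1 ((lt_ord.1 hνθ).trans_le hcof))
  obtain ⟨ε, hε⟩ := exists_altSum_sub_mem_almostZero hν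
    (he.mono (Iio_subset_Iio hνθ.le)) (IH hsup) hw
  refine ⟨ε, fun ζ hζ => ?_⟩
  convert add_mem (hε ζ hζ) (hC ζ hζ) using 1
  simp only [trivBelow]
  abel

theorem exists_trivialization_of_isSuccLimit (hδ : IsSuccLimit δ)
    (hcof : δ.cof ≤ ℵ_ (m + 1 : ℕ))
    (IH : ∀ {c : Ordinal} {Φ' : Family A (m + 1)}, c.cof ≤ ℵ_ m → altSum Φ' ∈ almostZero c →
      ∃ Ψ', altSum Ψ' - Φ' ∈ almostZero c)
    (hΦ : altSum Φ ∈ almostZero δ) : ∃ Ψ : Family A (m + 1), altSum Ψ - Φ ∈ almostZero δ := by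
  obtain ⟨e, he, heδ, hecof⟩ := exists_strictMonoOn_cofinal hδ
  obtain ⟨E, hE⟩ := exists_pairwise_of_extend (θ := δ.cof.ord)
    (fun ζ ν x y => trivBelow Φ (e ν) y - trivBelow Φ (e ζ) x ∈ almostZero (e ζ))
    fun ν hν E hE => by
      rcases zero_or_succ_or_isSuccLimit ν with rfl | ⟨μ, rfl⟩ | hνlim
      · exact ⟨0, fun ζ hζ => by simp at hζ⟩
      · exact exists_extension_succ hΦ he heδ hν fun ζ hζ => hE μ (lt_succ μ) ζ hζ
      · exact exists_extension_of_isSuccLimit hΦ he heδ hcof IH hνlim hν hE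
  exact ⟨glue e fun ζ => trivBelow Φ (e ζ) (E ζ), altSum_glue_sub_mem_almostZero hE
    (fun ζ hζ => altSum_trivBelow_sub_mem_almostZero hΦ (heδ ζ hζ) _) hecof⟩

end LimitStep

theorem exists_trivialization (n : ℕ) {δ : Ordinal.{0}} {Φ : Family A (n + 1)}
    (hcof : δ.cof ≤ ℵ_ n) (hΦ : altSum Φ ∈ almostZero δ) :
    ∃ Ψ : Family A n, altSum Ψ - Φ ∈ almostZero δ := by
  rcases zero_or_succ_or_isSuccLimit δ with rfl | ⟨γ, rfl⟩ | hδ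
  · exact ⟨0, fun β _ hβ => by simpa using hβ 0⟩
  · exact exists_trivialization_succ hΦ
  · match n with
    | 0 => exact exists_trivialization_one_of_isSuccLimit hδ (by simpa using hcof) hΦ
    | m + 1 => exact exists_trivialization_of_isSuccLimit hδ hcof (exists_trivialization m) hΦ

end Coherence

/-- Theorem (Goblot): for any abelian group `A`, positive integer `n` (here `n + 1`), and
ordinal `δ` of cofinality `< ℵ_n` (in particular any successor `δ`), every `n`-coherent
`A`-valued family of height `δ` is `n`-trivial. -/
theorem statement11 (A : Type*) [AddCommGroup A] (n : ℕ) (δ : Ordinal)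
    (hδ : Ordinal.cof δ < Cardinal.aleph ((n : Ordinal) + 1))
    (Φ : (Fin (n + 1) → Ordinal) → Ordinal → A) (hΦ : NCoherent δ Φ) :
    NTrivial δ Φ := by
  rw [← Cardinal.succ_aleph, Order.lt_succ_iff] at hδ
  obtain ⟨Ψ, hΨ⟩ := Coherence.exists_trivialization n hδ hΦ
  exact ⟨Ψ, fun β hβ hβδ => by simpa [sub_ne_zero] using hΨ β hβ hβδ⟩
end
end
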